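/- arXiv:2403.15066 — 14 statements merged into one kernel-verified Lean document; each statement's English description precedes it below -/
import Mathlib

section
/- For any three unit vectors ψ₁, ψ₂, ψ₃ in a complex inner product space, the real part of the third-order Bargmann invariant Δ₁₂₃ = ⟨ψ₁,ψ₂⟩⟨ψ₂,ψ₃⟩⟨ψ₃,ψ₁⟩ satisfies 1 − Δ₁₂ − Δ₁₃ − Δ₂₃ + 2·Re(Δ₁₂₃) ≥ 0, where Δ_{ij} = |⟨ψᵢ,ψⱼ⟩|². -/
/-- Gram-determinant inequality for three unit vectors:
`1 - Δ₁₂ - Δ₁₃ - Δ₂₃ + 2 Re(Δ₁₂₃) ≥ 0`. -/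
theorem gram_det_ineq_three
    (E : Type*) [NormedAddCommGroup E] [InnerProductSpace ℂ E]
    [FiniteDimensional ℂ E]
    (ψ₁ ψ₂ ψ₃ : E) (h₁ : ‖ψ₁‖ = 1) (h₂ : ‖ψ₂‖ = 1) (h₃ : ‖ψ₃‖ = 1) :
    1 - ‖(inner ℂ ψ₁ ψ₂ : ℂ)‖ ^ 2 - ‖(inner ℂ ψ₁ ψ₃ : ℂ)‖ ^ 2
      - ‖(inner ℂ ψ₂ ψ₃ : ℂ)‖ ^ 2
      + 2 * ((inner ℂ ψ₁ ψ₂ : ℂ) * (inner ℂ ψ₂ ψ₃ : ℂ) * (inner ℂ ψ₃ ψ₁ : ℂ)).re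
      ≥ 0 := by
  set a : ℂ := inner ℂ ψ₁ ψ₂ with ha
  set b : ℂ := inner ℂ ψ₂ ψ₃ with hb
  set c : ℂ := inner ℂ ψ₃ ψ₁ with hc
  have hca : (inner ℂ ψ₂ ψ₁ : ℂ) = starRingEnd ℂ a := by rw [ha, inner_conj_symm]
  have hcb : (inner ℂ ψ₃ ψ₂ : ℂ) = starRingEnd ℂ b := by rw [hb, inner_conj_symm]
  have hcc : (inner ℂ ψ₁ ψ₃ : ℂ) = starRingEnd ℂ c := by rw [hc, inner_conj_symm]
  set x : E := ψ₁ - (starRingEnd ℂ a) • ψ₂ with hx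
  set y : E := ψ₃ - b • ψ₂ with hy
  have h₂' : (inner ℂ ψ₂ ψ₂ : ℂ) = 1 := by simp [inner_self_eq_norm_sq_to_K, h₂]
  have h₁' : (inner ℂ ψ₁ ψ₁ : ℂ) = 1 := by simp [inner_self_eq_norm_sq_to_K, h₁]
  have h₃' : (inner ℂ ψ₃ ψ₃ : ℂ) = 1 := by simp [inner_self_eq_norm_sq_to_K, h₃]
  have hxy : (inner ℂ x y : ℂ) = starRingEnd ℂ c - a * b := by
    simp [-inner_self_eq_norm_sq_to_K, hx, hy, inner_sub_left, inner_sub_right, inner_smul_left, inner_smul_right,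
      h₂', hca, hcb, hcc, ← ha, ← hb, mul_comm]
  have hxx : ‖x‖ ^ 2 = 1 - ‖a‖ ^ 2 := by
    have hin : (inner ℂ x x : ℂ) = 1 - (‖a‖ : ℂ) ^ 2 := by
      simp [-inner_self_eq_norm_sq_to_K, hx, inner_sub_left, inner_sub_right, inner_smul_left, inner_smul_right,
        h₂', h₁', hca, ← ha, Complex.sq_norm,
        Complex.normSq_eq_conj_mul_self]
      rw [mul_comm, Complex.mul_conj]
      norm_cast
      exact (Complex.sq_norm a).symm
    have h := (inner_self_eq_norm_sq_to_K (𝕜 := ℂ) x).symm.trans hin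
    have h2 : ((‖x‖ ^ 2 : ℝ) : ℂ) = ((1 - ‖a‖ ^ 2 : ℝ) : ℂ) := by push_cast; exact h
    exact_mod_cast h2
  have hyy : ‖y‖ ^ 2 = 1 - ‖b‖ ^ 2 := by
    have hin : (inner ℂ y y : ℂ) = 1 - (‖b‖ : ℂ) ^ 2 := by
      simp [-inner_self_eq_norm_sq_to_K, hy, inner_sub_left, inner_sub_right, inner_smul_left, inner_smul_right,
        h₂', h₃', hcb, ← hb, Complex.sq_norm,
        Complex.normSq_eq_conj_mul_self]
      rw [mul_comm, ← Complex.normSq_eq_conj_mul_self]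
      norm_cast
      exact (Complex.sq_norm b).symm
    have h := (inner_self_eq_norm_sq_to_K (𝕜 := ℂ) y).symm.trans hin
    have h2 : ((‖y‖ ^ 2 : ℝ) : ℂ) = ((1 - ‖b‖ ^ 2 : ℝ) : ℂ) := by push_cast; exact h
    exact_mod_cast h2
  have hcs : ‖(inner ℂ x y : ℂ)‖ ^ 2 ≤ ‖x‖ ^ 2 * ‖y‖ ^ 2 := by
    have := norm_inner_le_norm (𝕜 := ℂ) x y
    nlinarith [norm_nonneg x, norm_nonneg y, norm_nonneg (inner ℂ x y : ℂ)]
  rw [hxy, hxx, hyy] at hcs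
  have hexp : ‖starRingEnd ℂ c - a * b‖ ^ 2
      = ‖c‖ ^ 2 + ‖a‖ ^ 2 * ‖b‖ ^ 2 - 2 * (a * b * c).re := by
    simp only [Complex.sq_norm, Complex.normSq_apply,
      Complex.sub_re, Complex.sub_im, Complex.mul_re, Complex.mul_im,
      Complex.conj_re, Complex.conj_im]
    ring
  rw [hexp] at hcs
  rw [hcc]
  simp only [RCLike.norm_conj]
  linarith
end

section
/- For any three unit vectors ψ₁, ψ₂, ψ₃ in a complex inner product space, the Bargmann invariant Δ = ⟨ψ₁,ψ₂⟩⟨ψ₂,ψ₃⟩⟨ψ₃,ψ₁⟩ satisfies 1 − 3|Δ|^(2/3) + 2·Re(Δ) ≥ 0. -/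
/-!
The Gram matrix of unit vectors `x, y, z` is positive semidefinite, so its determinant
`1 - |⟪x,y⟫|² - |⟪y,z⟫|² - |⟪z,x⟫|² + 2 Re (⟪x,y⟫⟪y,z⟫⟪z,x⟫)` is nonnegative; concretely this is
Cauchy–Schwarz for the components of `x` and `y` orthogonal to `z`. By AM–GM,
`|⟪x,y⟫|² + |⟪y,z⟫|² + |⟪z,x⟫|² ≥ 3 |Δ|^(2/3)`.
-/

open RCLike
open scoped InnerProductSpace ComplexConjugate

section
variable {𝕜 E : Type*} [RCLike 𝕜] [NormedAddCommGroup E] [InnerProductSpace 𝕜 E]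

theorem inner_sub_inner_smul_sub_inner_smul {x : E} (hx : ‖x‖ = 1) (y z : E) :
    ⟪y - ⟪x, y⟫_𝕜 • x, z - ⟪x, z⟫_𝕜 • x⟫_𝕜 = ⟪y, z⟫_𝕜 - ⟪y, x⟫_𝕜 * ⟪x, z⟫_𝕜 := by
  have hxx : ⟪x, x⟫_𝕜 = 1 := by simp [inner_self_eq_norm_sq_to_K, hx]
  simp only [inner_sub_left, inner_sub_right, inner_smul_left, inner_smul_right, hxx,
    inner_conj_symm]
  ring

theorem sq_norm_sub_inner_smul {x y : E} (hx : ‖x‖ = 1) (hy : ‖y‖ = 1) :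
    ‖y - ⟪x, y⟫_𝕜 • x‖ ^ 2 = 1 - ‖⟪x, y⟫_𝕜‖ ^ 2 := by
  rw [@norm_sq_eq_re_inner 𝕜, inner_sub_inner_smul_sub_inner_smul hx, ← inner_conj_symm x y,
    RCLike.mul_conj, inner_self_eq_norm_sq_to_K, hy]
  simp [norm_inner_symm]

theorem sq_norm_inner_sub_inner_mul_inner (x y z : E) :
    ‖⟪x, y⟫_𝕜 - ⟪x, z⟫_𝕜 * ⟪z, y⟫_𝕜‖ ^ 2
      = ‖⟪x, y⟫_𝕜‖ ^ 2 + ‖⟪y, z⟫_𝕜‖ ^ 2 * ‖⟪z, x⟫_𝕜‖ ^ 2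
        - 2 * re (⟪x, y⟫_𝕜 * ⟪y, z⟫_𝕜 * ⟪z, x⟫_𝕜) := by
  rw [@norm_sub_sq 𝕜 𝕜, norm_mul, norm_inner_symm x z, norm_inner_symm z y, inner_apply,
    ← conj_re]
  simp only [map_mul, inner_conj_symm]
  ring_nf

theorem gram_det_nonneg_of_norm_eq_one {x y z : E} (hx : ‖x‖ = 1) (hy : ‖y‖ = 1)
    (hz : ‖z‖ = 1) :
    0 ≤ 1 - ‖⟪x, y⟫_𝕜‖ ^ 2 - ‖⟪y, z⟫_𝕜‖ ^ 2 - ‖⟪z, x⟫_𝕜‖ ^ 2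
      + 2 * re (⟪x, y⟫_𝕜 * ⟪y, z⟫_𝕜 * ⟪z, x⟫_𝕜) := by
  have cauchy_schwarz := pow_le_pow_left₀ (norm_nonneg _)
    (norm_inner_le_norm (𝕜 := 𝕜) (x - ⟪z, x⟫_𝕜 • z) (y - ⟪z, y⟫_𝕜 • z)) 2
  rw [mul_pow, sq_norm_sub_inner_smul hz hx, sq_norm_sub_inner_smul hz hy,
    inner_sub_inner_smul_sub_inner_smul hz, sq_norm_inner_sub_inner_mul_inner,
    norm_inner_symm z y] at cauchy_schwarz
  nlinarith
end

theorem three_mul_rpow_two_thirds_le_sq_add_sq_add_sq {a b c : ℝ} (ha : 0 ≤ a) (hb : 0 ≤ b)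
    (hc : 0 ≤ c) : 3 * (a * b * c) ^ ((2 : ℝ) / 3) ≤ a ^ 2 + b ^ 2 + c ^ 2 := by
  have amgm := Real.geom_mean_le_arith_mean3_weighted (w₁ := 1 / 3) (w₂ := 1 / 3)
    (w₃ := 1 / 3) (by norm_num) (by norm_num) (by norm_num) (sq_nonneg a) (sq_nonneg b)
    (sq_nonneg c) (by norm_num)
  rw [← Real.mul_rpow (sq_nonneg a) (sq_nonneg b),
    ← Real.mul_rpow (mul_nonneg (sq_nonneg a) (sq_nonneg b)) (sq_nonneg c), ← mul_pow,
    ← mul_pow, ← Real.rpow_natCast, ← Real.rpow_mul (by positivity)] at amgm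
  norm_num at amgm
  linarith

theorem bargmann_three_bound_general
    (E : Type*) [NormedAddCommGroup E] [InnerProductSpace ℂ E]
    (ψ₁ ψ₂ ψ₃ : E) (h₁ : ‖ψ₁‖ = 1) (h₂ : ‖ψ₂‖ = 1) (h₃ : ‖ψ₃‖ = 1)
    (Δ : ℂ) (hΔ : Δ = (inner ℂ ψ₁ ψ₂ : ℂ) * (inner ℂ ψ₂ ψ₃ : ℂ) * (inner ℂ ψ₃ ψ₁ : ℂ)) :
    1 - 3 * ‖Δ‖ ^ ((2 : ℝ) / 3) + 2 * Δ.re ≥ 0 := by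
  have gram := gram_det_nonneg_of_norm_eq_one (𝕜 := ℂ) h₁ h₂ h₃
  have amgm := three_mul_rpow_two_thirds_le_sq_add_sq_add_sq (norm_nonneg (inner ℂ ψ₁ ψ₂))
    (norm_nonneg (inner ℂ ψ₂ ψ₃)) (norm_nonneg (inner ℂ ψ₃ ψ₁))
  rw [← norm_mul, ← norm_mul, ← hΔ] at amgm
  rw [← hΔ, RCLike.re_to_complex] at gram
  linarith

/-- Any third-order Bargmann invariant `Δ` of three unit vectors satisfies
`1 - 3|Δ|^(2/3) + 2 Re Δ ≥ 0`. -/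
theorem bargmann_three_bound
    (E : Type*) [NormedAddCommGroup E] [InnerProductSpace ℂ E]
    [FiniteDimensional ℂ E]
    (ψ₁ ψ₂ ψ₃ : E) (h₁ : ‖ψ₁‖ = 1) (h₂ : ‖ψ₂‖ = 1) (h₃ : ‖ψ₃‖ = 1)
    (Δ : ℂ) (hΔ : Δ = (inner ℂ ψ₁ ψ₂ : ℂ) * (inner ℂ ψ₂ ψ₃ : ℂ) * (inner ℂ ψ₃ ψ₁ : ℂ)) :
    1 - 3 * ‖Δ‖ ^ ((2 : ℝ) / 3) + 2 * Δ.re ≥ 0 :=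
  bargmann_three_bound_general E ψ₁ ψ₂ ψ₃ h₁ h₂ h₃ Δ hΔ
end

section
/- The real part of any third-order Bargmann invariant of three unit vectors is at least −1/8, and this bound is tight: there exist three unit vectors with Bargmann invariant equal to −1/8. -/
private theorem bargmann_amgm3 (a b c : ℝ) (ha : 0 ≤ a) (hb : 0 ≤ b) (hc : 0 ≤ c) :
    (a+b+c)^3 ≥ 27*(a*b*c) := by
  nlinarith [mul_nonneg ha (sq_nonneg (b-c)), mul_nonneg hb (sq_nonneg (a-c)),
    mul_nonneg hc (sq_nonneg (a-b)),
    mul_nonneg (add_nonneg (add_nonneg ha hb) hc) (sq_nonneg (a-b)),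
    mul_nonneg (add_nonneg (add_nonneg ha hb) hc) (sq_nonneg (b-c)),
    mul_nonneg (add_nonneg (add_nonneg ha hb) hc) (sq_nonneg (a-c))]

private theorem bargmann_real_endgame (x y z r : ℝ) (hx0 : 0 ≤ x) (hy0 : 0 ≤ y) (hz0 : 0 ≤ z)
    (h1 : r ≥ -(x*y*z)) (h2 : 2*r ≥ x^2+y^2+z^2-1) : r ≥ -(1/8) := by
  by_contra h
  push_neg at h
  have hxyz : x*y*z > 1/8 := by nlinarith
  have hs : x^2+y^2+z^2 < 3/4 := by nlinarith
  have amgm : (x^2+y^2+z^2)^3 ≥ 27*((x*y*z)^2) := by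
    have := bargmann_amgm3 (x^2) (y^2) (z^2) (sq_nonneg x) (sq_nonneg y) (sq_nonneg z)
    calc (x^2+y^2+z^2)^3 ≥ 27*(x^2*y^2*z^2) := this
    _ = 27*((x*y*z)^2) := by ring
  nlinarith [sq_nonneg (x^2+y^2+z^2), sq_nonneg (x*y*z)]

private theorem bargmann_gram (E : Type) [NormedAddCommGroup E] [InnerProductSpace ℂ E]
    (ψ₁ ψ₂ ψ₃ : E) (h1 : ‖ψ₁‖ = 1) (h2 : ‖ψ₂‖ = 1) (h3 : ‖ψ₃‖ = 1) :
    2 * ((inner ℂ ψ₁ ψ₂ : ℂ) * (inner ℂ ψ₂ ψ₃ : ℂ) * (inner ℂ ψ₃ ψ₁ : ℂ)).re ≥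
      ‖(inner ℂ ψ₁ ψ₂ : ℂ)‖^2 + ‖(inner ℂ ψ₂ ψ₃ : ℂ)‖^2 + ‖(inner ℂ ψ₃ ψ₁ : ℂ)‖^2 - 1 := by
  set a : ℂ := inner ℂ ψ₁ ψ₂ with ha
  set b : ℂ := inner ℂ ψ₂ ψ₃ with hb
  set c : ℂ := inner ℂ ψ₃ ψ₁ with hc
  set u : E := ψ₂ - a • ψ₁ with hu
  set v : E := ψ₃ - (starRingEnd ℂ c) • ψ₁ with hv
  have hip : (inner ℂ ψ₁ ψ₁ : ℂ) = 1 := by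
    rw [inner_self_eq_norm_sq_to_K, h1]; norm_num
  have h21 : (inner ℂ ψ₂ ψ₁ : ℂ) = starRingEnd ℂ a := by rw [← inner_conj_symm, ha]
  have h13 : (inner ℂ ψ₁ ψ₃ : ℂ) = starRingEnd ℂ c := by rw [← inner_conj_symm, hc]
  have huv : (inner ℂ u v : ℂ) = b - (starRingEnd ℂ a) * (starRingEnd ℂ c) := by
    simp only [hu, hv, inner_sub_left, inner_sub_right, inner_smul_left, inner_smul_right, hip,
      h21, h13, ← hb]
    ring
  have hun : ‖u‖^2 = 1 - ‖a‖^2 := by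
    rw [hu, @norm_sub_sq ℂ, inner_smul_right, h2, norm_smul, h1, h21]
    simp [Complex.mul_re, Complex.conj_re, Complex.conj_im, Complex.sq_norm,
      Complex.normSq_apply]
    ring
  have hvn : ‖v‖^2 = 1 - ‖c‖^2 := by
    rw [hv, @norm_sub_sq ℂ, inner_smul_right, h3, norm_smul, h1, ← hc]
    simp [Complex.mul_re, Complex.conj_re, Complex.conj_im, Complex.sq_norm,
      Complex.normSq_apply]
    ring
  have hCS : ‖(inner ℂ u v : ℂ)‖^2 ≤ ‖u‖^2 * ‖v‖^2 := by
    have := norm_inner_le_norm (𝕜 := ℂ) u v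
    nlinarith [norm_nonneg u, norm_nonneg v, norm_nonneg (inner ℂ u v : ℂ)]
  rw [huv, hun, hvn] at hCS
  have hlhs : ‖b - (starRingEnd ℂ a) * (starRingEnd ℂ c)‖^2
      = ‖b‖^2 - 2*(a*b*c).re + ‖a‖^2*‖c‖^2 := by
    simp only [Complex.sq_norm, Complex.normSq_apply, Complex.mul_re,
      Complex.mul_im, Complex.sub_re, Complex.sub_im, Complex.conj_re, Complex.conj_im]
    ring
  rw [hlhs] at hCS
  nlinarith [hCS]

private noncomputable def bargmannS : ℝ := Real.sqrt 3 / 2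

private noncomputable def bargmannPsi : Fin 3 → EuclideanSpace ℂ (Fin 3) :=
  ![(WithLp.equiv 2 (Fin 3 → ℂ)).symm ![1, 0, 0],
    (WithLp.equiv 2 (Fin 3 → ℂ)).symm ![-(1/2), (bargmannS:ℂ), 0],
    (WithLp.equiv 2 (Fin 3 → ℂ)).symm ![-(1/2), -(bargmannS:ℂ), 0]]

/-- The real part of any third-order Bargmann invariant is at least `-1/8`,
and this bound is tight. -/
theorem bargmann_three_re_ge_neg_eighth :
    (∀ (E : Type) [NormedAddCommGroup E] [InnerProductSpace ℂ E]
        [FiniteDimensional ℂ E] (ψ₁ ψ₂ ψ₃ : E),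
        ‖ψ₁‖ = 1 → ‖ψ₂‖ = 1 → ‖ψ₃‖ = 1 →
        ((inner ℂ ψ₁ ψ₂ : ℂ) * (inner ℂ ψ₂ ψ₃ : ℂ) * (inner ℂ ψ₃ ψ₁ : ℂ)).re ≥ -(1/8)) ∧
    (∃ ψ : Fin 3 → EuclideanSpace ℂ (Fin 3),
        (∀ i, ‖ψ i‖ = 1) ∧
        (inner ℂ (ψ 0) (ψ 1) : ℂ) * (inner ℂ (ψ 1) (ψ 2) : ℂ) * (inner ℂ (ψ 2) (ψ 0) : ℂ)
          = -(1/8)) := by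
  constructor
  · intro E _ _ _ ψ₁ ψ₂ ψ₃ h1 h2 h3
    set a : ℂ := inner ℂ ψ₁ ψ₂ with ha
    set b : ℂ := inner ℂ ψ₂ ψ₃ with hb
    set c : ℂ := inner ℂ ψ₃ ψ₁ with hc
    have hgram := bargmann_gram E ψ₁ ψ₂ ψ₃ h1 h2 h3
    rw [← ha, ← hb, ← hc] at hgram
    have habs : (a*b*c).re ≥ -(‖a‖*‖b‖*‖c‖) := by
      have h1 : |(a*b*c).re| ≤ ‖a*b*c‖ := Complex.abs_re_le_norm _
      have h2 : ‖a*b*c‖ = ‖a‖*‖b‖*‖c‖ := by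
        rw [norm_mul, norm_mul]
      rw [h2] at h1
      cases abs_le.mp h1 with
      | intro hl hr => linarith
    exact bargmann_real_endgame ‖a‖ ‖b‖ ‖c‖ _ (norm_nonneg a) (norm_nonneg b) (norm_nonneg c)
      habs hgram
  · have hs : bargmannS^2 = 3/4 := by
      rw [bargmannS, div_pow, Real.sq_sqrt (by norm_num : (0:ℝ) ≤ 3)]; norm_num
    refine ⟨bargmannPsi, ?_, ?_⟩
    · intro i
      have key : ∀ j, ‖bargmannPsi j‖^2 = 1 → ‖bargmannPsi j‖ = 1 := fun j h => by
        nlinarith [norm_nonneg (bargmannPsi j)]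
      apply key
      rw [← @inner_self_eq_norm_sq ℂ]
      fin_cases i <;>
        simp [bargmannPsi, PiLp.inner_apply, Fin.sum_univ_three, Complex.mul_re, Complex.conj_re,
          Complex.conj_im, -inner_self_eq_norm_sq_to_K] <;>
        nlinarith [hs]
    · simp [bargmannPsi, PiLp.inner_apply, Fin.sum_univ_three]
      ring_nf
      have hsc : ((bargmannS:ℝ):ℂ)^2 = 3/4 := by rw [← Complex.ofReal_pow, hs]; norm_num
      rw [Complex.conj_ofNat, hsc]; norm_num
end

section
/- The imaginary part of any third-order Bargmann invariant of three unit vectors is at most 1/4 in absolute value, and this bound is attained by some triple of unit vectors. -/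
open scoped InnerProductSpace ComplexConjugate

/-- Real-variable core inequality behind the Bargmann bound. -/
theorem bargmann_real_core (x y z R I : ℝ) (hx : 0 ≤ x) (hy : 0 ≤ y) (hz : 0 ≤ z)
    (hx1 : x ≤ 1) (hy1 : y ≤ 1) (hz1 : z ≤ 1)
    (h1 : x + y + z - 1 ≤ 2 * R) (h2 : R ^ 2 + I ^ 2 = x * y * z) :
    |I| ≤ 1 / 4 := by
  have hI2 : I ^ 2 ≤ 1 / 16 := by
    rcases le_or_gt (x + y + z) 1 with hs | hs
    · nlinarith [sq_nonneg (x - y), sq_nonneg (y - z), sq_nonneg (x - z),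
        mul_nonneg hx hy, mul_nonneg hy hz, mul_nonneg hx hz, sq_nonneg R,
        mul_nonneg (mul_nonneg hx hy) hz]
    · have hR : 0 ≤ R := by linarith
      have hR2 : ((x + y + z - 1) / 2) ^ 2 ≤ R ^ 2 := by nlinarith
      nlinarith [sq_nonneg (x - y), sq_nonneg (y - z), sq_nonneg (x - z),
        mul_nonneg hx hy, mul_nonneg hy hz, mul_nonneg hx hz,
        sq_nonneg (x + y + z - 3/2),
        mul_nonneg (mul_nonneg (sub_nonneg.2 hx1) (sub_nonneg.2 hy1)) (sub_nonneg.2 hz1),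
        mul_nonneg (sq_nonneg (x + y + z - 3/2)) (by linarith : (0:ℝ) ≤ 15/4 - (x+y+z)),
        mul_nonneg hz (sq_nonneg (x - y)), mul_nonneg hx (sq_nonneg (y - z)),
        mul_nonneg hy (sq_nonneg (x - z))]
  have := abs_nonneg I
  nlinarith [sq_abs I]

/-- Complex-number core of the Bargmann bound. -/
theorem bargmann_key_alg (a b c : ℂ) (ha : ‖a‖ ≤ 1) (hb : ‖b‖ ≤ 1)
    (hc : ‖c‖ ≤ 1)
    (h : ‖b - (starRingEnd ℂ) (a * c)‖ ^ 2
      ≤ (1 - ‖a‖ ^ 2) * (1 - ‖c‖ ^ 2)) :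
    |(a * b * c).im| ≤ 1 / 4 := by
  have hsq : ‖b - (starRingEnd ℂ) (a*c)‖ ^ 2
      = ‖b‖ ^ 2 + ‖a‖ ^ 2 * ‖c‖ ^ 2 - 2 * (a*b*c).re := by
    simp only [Complex.sq_norm, Complex.normSq_apply, Complex.sub_re, Complex.sub_im,
      Complex.mul_re, Complex.mul_im, Complex.conj_re, Complex.conj_im]
    ring
  have habs : (a*b*c).re ^ 2 + (a*b*c).im ^ 2
      = ‖a‖ ^ 2 * ‖b‖ ^ 2 * ‖c‖ ^ 2 := by
    simp only [Complex.sq_norm, Complex.normSq_apply, Complex.mul_re, Complex.mul_im]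
    ring
  refine bargmann_real_core _ _ _ _ _ (sq_nonneg _) (sq_nonneg _) (sq_nonneg _)
    ?_ ?_ ?_ ?_ habs
  · nlinarith [norm_nonneg a]
  · nlinarith [norm_nonneg b]
  · nlinarith [norm_nonneg c]
  · nlinarith [norm_nonneg (b - (starRingEnd ℂ) (a*c)),
      sq_nonneg (‖b - (starRingEnd ℂ) (a*c)‖)]

noncomputable def bargmannR : ℝ := (Real.sqrt 2)⁻¹

noncomputable def bargmannWit : Fin 3 → EuclideanSpace ℂ (Fin 3) :=
  ![(WithLp.equiv 2 (Fin 3 → ℂ)).symm ![1, 0, 0],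
    (WithLp.equiv 2 (Fin 3 → ℂ)).symm ![(bargmannR : ℂ), (bargmannR : ℂ), 0],
    (WithLp.equiv 2 (Fin 3 → ℂ)).symm ![(bargmannR : ℂ), (bargmannR : ℂ) * Complex.I, 0]]

/-- The imaginary part of any third-order Bargmann invariant is at most `1/4` in
absolute value, and this bound is attained. -/
theorem bargmann_three_im_le_quarter :
    (∀ (E : Type) [NormedAddCommGroup E] [InnerProductSpace ℂ E]
        [FiniteDimensional ℂ E] (ψ₁ ψ₂ ψ₃ : E),
        ‖ψ₁‖ = 1 → ‖ψ₂‖ = 1 → ‖ψ₃‖ = 1 →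
        |((inner ℂ ψ₁ ψ₂ : ℂ) * (inner ℂ ψ₂ ψ₃ : ℂ) * (inner ℂ ψ₃ ψ₁ : ℂ)).im| ≤ 1/4) ∧
    (∃ ψ : Fin 3 → EuclideanSpace ℂ (Fin 3),
        (∀ i, ‖ψ i‖ = 1) ∧
        |((inner ℂ (ψ 0) (ψ 1) : ℂ) * (inner ℂ (ψ 1) (ψ 2) : ℂ)
            * (inner ℂ (ψ 2) (ψ 0) : ℂ)).im| = 1/4) := by
  constructor
  · intro E _ _ _ ψ₁ ψ₂ ψ₃ h1 h2 h3
    set a : ℂ := inner ℂ ψ₁ ψ₂ with hadef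
    set b : ℂ := inner ℂ ψ₂ ψ₃ with hbdef
    set c : ℂ := inner ℂ ψ₃ ψ₁ with hcdef
    set u : E := ψ₂ - a • ψ₁ with hudef
    set v : E := ψ₃ - (conj c) • ψ₁ with hvdef
    have hself : (inner ℂ ψ₁ ψ₁ : ℂ) = 1 := by
      rw [inner_self_eq_norm_sq_to_K, h1]; norm_num
    have h13 : (inner ℂ ψ₁ ψ₃ : ℂ) = conj c := by rw [hcdef, inner_conj_symm]
    have h21 : (inner ℂ ψ₂ ψ₁ : ℂ) = conj a := by rw [hadef, inner_conj_symm]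
    have habs2 : ∀ w : ℂ, ((‖w‖ : ℂ)) ^ 2 = w * conj w := by
      intro w
      rw [Complex.mul_conj]; norm_cast; exact Complex.sq_norm w
    have huv : (inner ℂ u v : ℂ) = b - conj (a * c) := by
      simp only [hudef, hvdef, inner_sub_left, inner_sub_right, inner_smul_left,
        inner_smul_right, hself, h13, h21, ← hbdef, map_mul, Complex.conj_conj]
      ring
    have hu : ‖u‖ ^ 2 = 1 - ‖a‖ ^ 2 := by
      have key : (inner ℂ u u : ℂ) = 1 - (‖a‖ : ℂ) ^ 2 := by
        simp only [hudef, inner_sub_left, inner_sub_right, inner_smul_left,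
          inner_smul_right, hself, h21, ← hadef, Complex.conj_conj]
        rw [inner_self_eq_norm_sq_to_K, h2, habs2]
        push_cast; ring
      rw [inner_self_eq_norm_sq_to_K] at key
      have := congrArg Complex.re key; simpa [← Complex.ofReal_pow] using this
    have hv : ‖v‖ ^ 2 = 1 - ‖c‖ ^ 2 := by
      have key : (inner ℂ v v : ℂ) = 1 - (‖c‖ : ℂ) ^ 2 := by
        simp only [hvdef, inner_sub_left, inner_sub_right, inner_smul_left,
          inner_smul_right, hself, h13, Complex.conj_conj]
        rw [inner_self_eq_norm_sq_to_K, h3, habs2]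
        push_cast; ring
      rw [inner_self_eq_norm_sq_to_K] at key
      have := congrArg Complex.re key; simpa [← Complex.ofReal_pow] using this
    have hcs : ‖b - conj (a * c)‖ ^ 2
        ≤ (1 - ‖a‖ ^ 2) * (1 - ‖c‖ ^ 2) := by
      have h0 : ‖(inner ℂ u v : ℂ)‖ ≤ ‖u‖ * ‖v‖ := by
        exact norm_inner_le_norm u v
      rw [huv] at h0
      calc ‖b - conj (a * c)‖ ^ 2 ≤ (‖u‖ * ‖v‖) ^ 2 :=
            pow_le_pow_left₀ (norm_nonneg _) h0 2
        _ = (1 - ‖a‖ ^ 2) * (1 - ‖c‖ ^ 2) := by rw [mul_pow, hu, hv]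
    have hn : ∀ (x y : E), ‖x‖ = 1 → ‖y‖ = 1 → ‖(inner ℂ x y : ℂ)‖ ≤ 1 := by
      intro x y hx hy
      have := norm_inner_le_norm (𝕜 := ℂ) x y
      rw [hx, hy] at this
      simpa using this
    exact bargmann_key_alg a b c (hn ψ₁ ψ₂ h1 h2) (hn ψ₂ ψ₃ h2 h3) (hn ψ₃ ψ₁ h3 h1) hcs
  · have hrpos : (0:ℝ) ≤ bargmannR := by rw [bargmannR]; positivity
    have hr2 : bargmannR ^ 2 = 1/2 := by
      rw [bargmannR, inv_pow, Real.sq_sqrt (by norm_num : (0:ℝ) ≤ 2)]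
      norm_num
    have h0 : ‖bargmannWit 0‖ = 1 := by
      simp [bargmannWit, EuclideanSpace.norm_eq, Fin.sum_univ_three]
    have h1 : ‖bargmannWit 1‖ = 1 := by
      simp only [bargmannWit, EuclideanSpace.norm_eq, Fin.sum_univ_three]
      simp [abs_of_nonneg hrpos, hr2]
      norm_num
    have h2 : ‖bargmannWit 2‖ = 1 := by
      simp only [bargmannWit, EuclideanSpace.norm_eq, Fin.sum_univ_three]
      simp [abs_of_nonneg hrpos, hr2, Complex.norm_def, Complex.normSq_apply]
      norm_num
    have hc2 : ((bargmannR : ℂ)) ^ 2 = 1/2 := by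
      rw [← Complex.ofReal_pow, hr2]; norm_num
    have hinner01 : (inner ℂ (bargmannWit 0) (bargmannWit 1) : ℂ) = (bargmannR : ℂ) := by
      simp [bargmannWit, PiLp.inner_apply, Fin.sum_univ_three, RCLike.inner_apply]
    have hinner12 : (inner ℂ (bargmannWit 1) (bargmannWit 2) : ℂ)
        = (bargmannR : ℂ) ^ 2 * (1 + Complex.I) := by
      simp [bargmannWit, PiLp.inner_apply, Fin.sum_univ_three, RCLike.inner_apply,
        Complex.conj_ofReal]
      ring
    have hinner20 : (inner ℂ (bargmannWit 2) (bargmannWit 0) : ℂ) = (bargmannR : ℂ) := by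
      simp [bargmannWit, PiLp.inner_apply, Fin.sum_univ_three, RCLike.inner_apply,
        Complex.conj_ofReal]
    refine ⟨bargmannWit, by intro i; fin_cases i <;> assumption, ?_⟩
    rw [hinner01, hinner12, hinner20]
    have hprod : (bargmannR:ℂ) * ((bargmannR:ℂ)^2 * (1 + Complex.I)) * (bargmannR:ℂ)
        = (1/4 : ℂ) * (1 + Complex.I) := by
      linear_combination (1 + Complex.I) * ((bargmannR:ℂ)^2 + 1/2) * hc2
    rw [hprod]
    simp
end

section
/- For any state ρ (a positive semidefinite operator of trace 1) and any two unit vectors |i⟩, |f⟩, the Kirkwood–Dirac quasiprobability value ξ = ⟨f,i⟩⟨i, ρ f⟩ satisfies Re(ξ) ≥ −1/8 and |Im(ξ)| ≤ 1/4. -/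
/-!
Diagonalising `ρ = ∑ₖ λₖ |bₖ⟩⟨bₖ|` writes `ξ` as the convex combination `∑ₖ λₖ Δ(f, i, bₖ)` of
third-order Bargmann invariants `Δ(u, v, w) = ⟨u,v⟩⟨v,w⟩⟨w,u⟩` of unit vectors, and the region
`Re z ≥ -1/8, |Im z| ≤ 1/4` is convex, so it suffices to bound a single `Δ`. Nonnegativity of the
Gram determinant of `u, v, w` reads `|⟨u,v⟩|² + |⟨v,w⟩|² + |⟨w,u⟩|² ≤ 1 + 2 Re Δ`, and AM-GM bounds
the left side below by `3 |Δ|^(2/3)`; hence `27 |Δ|² ≤ (1 + 2 Re Δ)³` with `|Δ| ≤ 1`, which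
confines `Δ` to the region.
-/

open Matrix
open scoped ComplexOrder InnerProductSpace

def kirkwoodDiracRegion : Set ℂ := {z | -(1/8) ≤ z.re ∧ |z.im| ≤ 1/4}

theorem convex_kirkwoodDiracRegion : Convex ℝ kirkwoodDiracRegion := by
  have h : kirkwoodDiracRegion =
      Complex.reLm ⁻¹' Set.Ici (-(1/8)) ∩ Complex.imLm ⁻¹' Set.Icc (-(1/4)) (1/4) := by
    ext z
    simp [kirkwoodDiracRegion, abs_le]
  rw [h]
  exact ((convex_Ici _).linear_preimage _).inter ((convex_Icc _ _).linear_preimage _)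

theorem mem_kirkwoodDiracRegion_of_normSq_le (z : ℂ) (h1 : Complex.normSq z ≤ 1)
    (h : 27 * Complex.normSq z ≤ (1 + 2 * z.re) ^ 3) : z ∈ kirkwoodDiracRegion := by
  rw [Complex.normSq_apply] at h1 h
  set x := z.re
  set y := z.im
  -- `(1 + 2x)³ - 27x² = (8x + 1)(x - 1)²` and `27/16 - (8x + 1)(x - 1)² = (x - 1/4)²(11 - 8x)`
  have hre : -(1/8) ≤ x := by nlinarith [sq_nonneg (x - 1), sq_nonneg y]
  have hx : x ≤ 1 := by nlinarith [sq_nonneg y]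
  have hy : y ^ 2 ≤ (1/4) ^ 2 := by
    nlinarith [mul_nonneg (sq_nonneg (x - 1/4)) (by linarith : (0:ℝ) ≤ 11 - 8 * x)]
  exact ⟨hre, abs_le_of_sq_le_sq hy (by norm_num)⟩

theorem mul_mul_le_add_add_div_three_pow_three {x y z : ℝ} (hx : 0 ≤ x) (hy : 0 ≤ y)
    (hz : 0 ≤ z) : x * y * z ≤ ((x + y + z) / 3) ^ 3 := by
  nlinarith [mul_nonneg hx (sq_nonneg (y - z)), mul_nonneg hy (sq_nonneg (x - z)),
    mul_nonneg hz (sq_nonneg (x - y)), mul_nonneg (mul_nonneg hx hy) hz,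
    sq_nonneg (x - y), sq_nonneg (y - z), sq_nonneg (x - z)]

section Bargmann

variable {E : Type*} [NormedAddCommGroup E] [InnerProductSpace ℂ E]

noncomputable def bargmannInvariant (u v w : E) : ℂ := ⟪u, v⟫_ℂ * ⟪v, w⟫_ℂ * ⟪w, u⟫_ℂ

theorem det_gram_three {u v w : E} (hu : ‖u‖ = 1) (hv : ‖v‖ = 1) (hw : ‖w‖ = 1) :
    (gram ℂ ![u, v, w]).det = ((1 - Complex.normSq ⟪u, v⟫_ℂ - Complex.normSq ⟪v, w⟫_ℂ
      - Complex.normSq ⟪w, u⟫_ℂ + 2 * (bargmannInvariant u v w).re : ℝ) : ℂ) := by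
  rw [det_fin_three]
  simp only [gram, of_apply, cons_val_zero, cons_val_one, cons_val_two, vecHead, vecTail,
    Function.comp_apply, Fin.succ_zero_eq_one, inner_self_eq_norm_sq_to_K, hu, hv, hw]
  rw [← inner_conj_symm v u, ← inner_conj_symm w v, ← inner_conj_symm u w]
  push_cast
  rw [Complex.re_eq_add_conj]
  simp only [Complex.normSq_eq_conj_mul_self, bargmannInvariant, map_mul]
  ring

theorem normSq_inner_le_one {x y : E} (hx : ‖x‖ = 1) (hy : ‖y‖ = 1) :
    Complex.normSq ⟪x, y⟫_ℂ ≤ 1 := by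
  rw [Complex.normSq_eq_norm_sq, sq_le_one_iff₀ (norm_nonneg _)]
  simpa [hx, hy] using norm_inner_le_norm (𝕜 := ℂ) x y

theorem bargmannInvariant_mem_kirkwoodDiracRegion {u v w : E} (hu : ‖u‖ = 1) (hv : ‖v‖ = 1)
    (hw : ‖w‖ = 1) : bargmannInvariant u v w ∈ kirkwoodDiracRegion := by
  have hprod : Complex.normSq (bargmannInvariant u v w)
      = Complex.normSq ⟪u, v⟫_ℂ * Complex.normSq ⟪v, w⟫_ℂ * Complex.normSq ⟪w, u⟫_ℂ := by
    simp only [bargmannInvariant, Complex.normSq_mul]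
  have hgram := (posSemidef_gram ℂ ![u, v, w]).det_nonneg
  rw [det_gram_three hu hv hw, Complex.zero_le_real] at hgram
  set x := Complex.normSq ⟪u, v⟫_ℂ
  set y := Complex.normSq ⟪v, w⟫_ℂ
  set z := Complex.normSq ⟪w, u⟫_ℂ
  have hx : 0 ≤ x := Complex.normSq_nonneg _
  have hy : 0 ≤ y := Complex.normSq_nonneg _
  have hz : 0 ≤ z := Complex.normSq_nonneg _
  refine mem_kirkwoodDiracRegion_of_normSq_le _ ?_ ?_
  · rw [hprod]
    exact mul_le_one₀ (mul_le_one₀ (normSq_inner_le_one hu hv) hy (normSq_inner_le_one hv hw)) hz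
      (normSq_inner_le_one hw hu)
  · calc 27 * Complex.normSq (bargmannInvariant u v w) ≤ (x + y + z) ^ 3 := by
          rw [hprod]
          linarith [mul_mul_le_add_add_div_three_pow_three hx hy hz]
      _ ≤ (1 + 2 * (bargmannInvariant u v w).re) ^ 3 :=
          pow_le_pow_left₀ (by positivity) (by linarith) 3

end Bargmann

namespace Matrix.IsHermitian

variable {𝕜 n : Type*} [RCLike 𝕜] [Fintype n] [DecidableEq n] {A : Matrix n n 𝕜}

theorem inner_toEuclideanLin_eq_sum (hA : A.IsHermitian) (x y : EuclideanSpace 𝕜 n) :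
    ⟪x, toEuclideanLin A y⟫_𝕜
      = ∑ k, hA.eigenvalues k •
          (⟪x, hA.eigenvectorBasis k⟫_𝕜 * ⟪hA.eigenvectorBasis k, y⟫_𝕜) := by
  rw [← hA.eigenvectorBasis.sum_inner_mul_inner]
  refine Finset.sum_congr rfl fun k _ => ?_
  have heig : toEuclideanLin A (hA.eigenvectorBasis k)
      = hA.eigenvalues k • hA.eigenvectorBasis k :=
    congrArg (WithLp.toLp 2) (hA.mulVec_eigenvectorBasis k)
  rw [← (isSymmetric_toEuclideanLin_iff.mpr hA), heig, RCLike.real_smul_eq_coe_smul (K := 𝕜),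
    inner_smul_left, RCLike.conj_ofReal, RCLike.real_smul_eq_coe_mul]
  ring

end Matrix.IsHermitian

theorem EuclideanSpace.norm_toLp_eq_one {𝕜 n : Type*} [RCLike 𝕜] [Fintype n] {x : n → 𝕜}
    (hx : star x ⬝ᵥ x = 1) : ‖WithLp.toLp 2 x‖ = 1 := by
  have h : (‖WithLp.toLp 2 x‖ : 𝕜) ^ 2 = 1 := by
    rw [← inner_self_eq_norm_sq_to_K, EuclideanSpace.inner_toLp_toLp, dotProduct_comm, hx]
  exact (pow_eq_one_iff_of_nonneg (norm_nonneg _) two_ne_zero).mp (by exact_mod_cast h)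

/-- Bounds on Kirkwood–Dirac quasiprobability values:
for a density matrix `ρ` and unit vectors `i`, `f`,
`ξ = ⟨f,i⟩⟨i,ρf⟩` satisfies `Re ξ ≥ -1/8` and `|Im ξ| ≤ 1/4`. -/
theorem kirkwood_dirac_bounds (n : ℕ) (ρ : Matrix (Fin n) (Fin n) ℂ)
    (hρ : ρ.PosSemidef) (htr : ρ.trace = 1)
    (i f : Fin n → ℂ) (hi : star i ⬝ᵥ i = 1) (hf : star f ⬝ᵥ f = 1)
    (ξ : ℂ) (hξ : ξ = (star f ⬝ᵥ i) * (star i ⬝ᵥ ρ.mulVec f)) :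
    ξ.re ≥ -(1/8) ∧ |ξ.im| ≤ 1/4 := by
  have hsum : ∑ k, hρ.1.eigenvalues k = 1 := by
    rw [← Complex.ofReal_eq_one, Complex.ofReal_sum]
    exact hρ.1.trace_eq_sum_eigenvalues.symm.trans htr
  have hξ' : ξ = ∑ k, hρ.1.eigenvalues k •
      bargmannInvariant (WithLp.toLp 2 f) (WithLp.toLp 2 i) (hρ.1.eigenvectorBasis k) := by
    have hfi : star f ⬝ᵥ i = ⟪WithLp.toLp 2 f, WithLp.toLp 2 i⟫_ℂ := dotProduct_comm _ _
    have hiρf : star i ⬝ᵥ ρ *ᵥ f = ⟪WithLp.toLp 2 i, toEuclideanLin ρ (WithLp.toLp 2 f)⟫_ℂ :=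
      dotProduct_comm _ _
    rw [hξ, hfi, hiρf, hρ.1.inner_toEuclideanLin_eq_sum, Finset.mul_sum]
    simp only [bargmannInvariant, mul_smul_comm, mul_assoc]
  rw [hξ']
  exact convex_kirkwoodDiracRegion.sum_mem (fun k _ => hρ.eigenvalues_nonneg k) hsum fun k _ =>
    bargmannInvariant_mem_kirkwoodDiracRegion (EuclideanSpace.norm_toLp_eq_one hf)
      (EuclideanSpace.norm_toLp_eq_one hi) (hρ.1.eigenvectorBasis.orthonormal.1 k)
end

section
/- For any φ ∈ [0, 2π), the maximal modulus r of a complex number α = |α|e^{iθ} with 4θ = φ, subject to the existence of s ∈ [−1,1] with 2|Re α| ≤ 1 + s and 2|Im α| ≤ 1 − s, satisfies r^{1/4} = 1/(|sin(φ/4)| + |cos(φ/4)|); equivalently the extremal fourth-order invariant is Δ = e^{iφ}/(sin(φ/4) + cos(φ/4))⁴ for φ ∈ [0, 2π). -/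
open Real

/-- For each phase `φ ∈ [0, 2π)`, the maximal modulus of `α = ρ e^{iφ/4}` compatible
with the circulant positivity constraints `2|Re α| ≤ 1+s`, `2|Im α| ≤ 1-s` for some
`s ∈ [-1,1]` is `1/(|sin(φ/4)| + |cos(φ/4)|)`; so the extremal fourth-order invariant
is `Δ = e^{iφ}/(sin(φ/4)+cos(φ/4))⁴`. -/
theorem circulant_boundary_max_modulus (φ : ℝ) (hφ₀ : 0 ≤ φ) (hφ : φ < 2 * π) :
    IsGreatest
      {r : ℝ | 0 ≤ r ∧ ∃ s : ℝ, -1 ≤ s ∧ s ≤ 1 ∧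
          2 * |((r : ℂ) * Complex.exp ((φ / 4 : ℝ) * Complex.I)).re| ≤ 1 + s ∧
          2 * |((r : ℂ) * Complex.exp ((φ / 4 : ℝ) * Complex.I)).im| ≤ 1 - s}
      (1 / (|sin (φ / 4)| + |cos (φ / 4)|)) ∧
    ((1 / (|sin (φ / 4)| + |cos (φ / 4)|) : ℝ) : ℂ) ^ 4 * Complex.exp (φ * Complex.I)
      = Complex.exp (φ * Complex.I) / ((sin (φ / 4) + cos (φ / 4) : ℝ) : ℂ) ^ 4 := by
  have hπ : 0 < π := Real.pi_pos
  have h1 : φ / 4 < π / 2 := by linarith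
  have hc : 0 < Real.cos (φ / 4) :=
    Real.cos_pos_of_mem_Ioo ⟨by linarith, h1⟩
  have hs : 0 ≤ Real.sin (φ / 4) :=
    Real.sin_nonneg_of_nonneg_of_le_pi (by linarith) (by linarith)
  have habs_s : |Real.sin (φ / 4)| = Real.sin (φ / 4) := abs_of_nonneg hs
  have habs_c : |Real.cos (φ / 4)| = Real.cos (φ / 4) := abs_of_nonneg hc.le
  simp only [habs_s, habs_c]
  set S := Real.sin (φ / 4) with hSdef
  set C := Real.cos (φ / 4) with hCdef
  have hSC : 0 < S + C := by positivity
  have hre : ∀ r : ℝ, ((r : ℂ) * Complex.exp ((φ / 4 : ℝ) * Complex.I)).re = r * C := by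
    intro r
    simp [Complex.mul_re, Complex.mul_im, Complex.exp_re, Complex.exp_im, hCdef]
  have him : ∀ r : ℝ, ((r : ℂ) * Complex.exp ((φ / 4 : ℝ) * Complex.I)).im = r * S := by
    intro r
    simp [Complex.mul_re, Complex.mul_im, Complex.exp_re, Complex.exp_im, hSdef]
  constructor
  · constructor
    · -- membership
      refine ⟨by positivity, 2 * C / (S + C) - 1, ?_, ?_, ?_, ?_⟩
      · have : 0 ≤ 2 * C / (S + C) := by positivity
        linarith
      · have : 2 * C / (S + C) ≤ 2 := by
          rw [div_le_iff₀ hSC]; linarith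
        linarith
      · rw [hre, abs_of_nonneg (by positivity)]
        have : 2 * (1 / (S + C) * C) = 2 * C / (S + C) := by ring
        linarith
      · rw [him, abs_of_nonneg (by positivity)]
        rw [← sub_nonneg]
        have : 1 - (2 * C / (S + C) - 1) - 2 * (1 / (S + C) * S) = 0 := by
          field_simp
          ring
        linarith
    · -- upper bound
      rintro r ⟨hr0, s, hs1, hs2, h₁, h₂⟩
      rw [hre, abs_of_nonneg (by positivity)] at h₁
      rw [him, abs_of_nonneg (by positivity)] at h₂
      rw [le_div_iff₀ hSC]
      nlinarith
  · push_cast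
    rw [mul_comm, div_eq_mul_inv, one_mul, inv_pow]
    exact (div_eq_mul_inv _ _).symm
end

section
/- For the four qubit states |ψ_k⟩ = sin θ |0⟩ + i^k cos θ |1⟩, k = 0,1,2,3, the fourth-order Bargmann invariant Δ₄ = ⟨ψ₀,ψ₁⟩⟨ψ₁,ψ₂⟩⟨ψ₂,ψ₃⟩⟨ψ₃,ψ₀⟩ equals (sin²θ + i cos²θ)⁴, and writing Δ₄ = r e^{iφ} one has r = 1/(cos(φ/4) + sin(φ/4))⁴. -/
open Matrix Real

/-!
Each adjacent overlap `⟨ψ_k, ψ_{k+1}⟩` equals `z = sin²θ + i cos²θ`, because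
`conj (i^k) · i^(k+1) = i`; hence `Δ₄ = z⁴`.

For the polar form, the quantity `|re u| + |im u|` is invariant under multiplication by the
fourth roots of unity, so it depends only on `u⁴`. If `z⁴ = r e^{iφ}` with `0 ≤ φ ≤ 2π`, then
`w = ‖z‖ e^{iφ/4}` is a fourth root of `z⁴` in the closed first quadrant, and comparing
`z` with `w` gives `1 = sin²θ + cos²θ = r^{1/4} (cos (φ/4) + sin (φ/4))`.
-/

namespace Complex

lemma abs_re_add_abs_im_eq_of_pow_four_eq {u v : ℂ} (h : u ^ 4 = v ^ 4) :
    |u.re| + |u.im| = |v.re| + |v.im| := by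
  have hroots : (u - v) * (u + v) * (u - I * v) * (u + I * v) = 0 := by
    linear_combination h + (v ^ 4 - u ^ 2 * v ^ 2) * I_sq
  simp only [mul_eq_zero, sub_eq_zero, add_eq_zero_iff_eq_neg] at hroots
  rcases hroots with ((rfl | rfl) | rfl) | rfl <;> simp [add_comm]

lemma abs_re_add_abs_im_ofReal_mul_exp {m β : ℝ} (hm : 0 ≤ m) (hβ₀ : 0 ≤ β) (hβ₁ : β ≤ π / 2) :
    |((m : ℂ) * exp (β * I)).re| + |((m : ℂ) * exp (β * I)).im| =
      m * (Real.cos β + Real.sin β) := by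
  have hcos : 0 ≤ Real.cos β := Real.cos_nonneg_of_mem_Icc ⟨by linarith [pi_pos], hβ₁⟩
  have hsin : 0 ≤ Real.sin β := Real.sin_nonneg_of_nonneg_of_le_pi hβ₀ (by linarith [pi_pos])
  simp only [re_ofReal_mul, im_ofReal_mul, exp_ofReal_mul_I_re, exp_ofReal_mul_I_im]
  rw [abs_of_nonneg (mul_nonneg hm hcos), abs_of_nonneg (mul_nonneg hm hsin)]
  ring

lemma mul_cos_add_sin_pow_four_eq {z : ℂ} {r φ : ℝ} (hr : 0 ≤ r) (hφ₀ : 0 ≤ φ) (hφ₁ : φ ≤ 2 * π)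
    (h : z ^ 4 = r * exp (φ * I)) :
    r * (Real.cos (φ / 4) + Real.sin (φ / 4)) ^ 4 = (|z.re| + |z.im|) ^ 4 := by
  have hnorm : ‖z‖ ^ 4 = r := by
    rw [← norm_pow, h, norm_mul, norm_exp_ofReal_mul_I, norm_real, Real.norm_of_nonneg hr,
      mul_one]
  have hw : z ^ 4 = ((‖z‖ : ℂ) * exp ((φ / 4 : ℝ) * I)) ^ 4 := by
    rw [mul_pow, ← exp_nat_mul, h, ← hnorm]
    push_cast
    ring_nf
  rw [abs_re_add_abs_im_eq_of_pow_four_eq hw,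
    abs_re_add_abs_im_ofReal_mul_exp (norm_nonneg z) (by positivity) (by linarith), ← hnorm]
  ring

end Complex

open Complex in
lemma star_qubit_dotProduct_succ (a b : ℝ) (n : ℕ) :
    star ![(a : ℂ), I ^ n * b] ⬝ᵥ ![(a : ℂ), I ^ (n + 1) * b] = (a ^ 2 : ℝ) + I * (b ^ 2 : ℝ) := by
  have hI : (-I) ^ n * I ^ (n + 1) = I := by
    rw [pow_succ, ← mul_assoc, ← mul_pow, neg_mul, I_mul_I, neg_neg, one_pow, one_mul]
  simp only [dotProduct, Fin.sum_univ_two, cons_val_zero, cons_val_one, Pi.star_apply,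
    Complex.star_def, map_mul, map_pow, conj_ofReal, conj_I]
  push_cast
  linear_combination (b : ℂ) ^ 2 * hI

/-- For the qubit family `ψ_k = sin θ |0⟩ + i^k cos θ |1⟩`, the fourth-order Bargmann
invariant equals `(sin²θ + i cos²θ)⁴`, and writing it as `r e^{iφ}` with `φ ∈ [0,2π)`
one has `r = 1/(cos(φ/4)+sin(φ/4))⁴`. -/
theorem qubit_circulant_invariant (θ : ℝ)
    (ψ : Fin 4 → Fin 2 → ℂ)
    (hψ : ∀ k : Fin 4, ψ k = ![(sin θ : ℂ), Complex.I ^ (k : ℕ) * (cos θ : ℂ)])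
    (Δ : ℂ)
    (hΔ : Δ = (star (ψ 0) ⬝ᵥ ψ 1) * (star (ψ 1) ⬝ᵥ ψ 2) * (star (ψ 2) ⬝ᵥ ψ 3)
        * (star (ψ 3) ⬝ᵥ ψ 0)) :
    Δ = ((sin θ ^ 2 : ℝ) + Complex.I * (cos θ ^ 2 : ℝ)) ^ 4 ∧
    ∀ r φ : ℝ, 0 < r → 0 ≤ φ → φ < 2 * π →
      Δ = (r : ℂ) * Complex.exp (φ * Complex.I) →
      r = 1 / (cos (φ / 4) + sin (φ / 4)) ^ 4 := by
  set z : ℂ := (sin θ ^ 2 : ℝ) + Complex.I * (cos θ ^ 2 : ℝ) with hz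
  have hstep := star_qubit_dotProduct_succ (sin θ) (cos θ)
  have h₀₁ : star (ψ 0) ⬝ᵥ ψ 1 = z := by rw [hψ, hψ]; exact hstep 0
  have h₁₂ : star (ψ 1) ⬝ᵥ ψ 2 = z := by rw [hψ, hψ]; exact hstep 1
  have h₂₃ : star (ψ 2) ⬝ᵥ ψ 3 = z := by rw [hψ, hψ]; exact hstep 2
  have h₃₀ : star (ψ 3) ⬝ᵥ ψ 0 = z := by
    rw [hψ, hψ, Fin.val_zero, pow_zero, ← Complex.I_pow_four]; exact hstep 3
  have hΔz : Δ = z ^ 4 := by rw [hΔ, h₀₁, h₁₂, h₂₃, h₃₀]; ring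
  refine ⟨hΔz, fun r φ hr hφ₀ hφ₁ hpolar => ?_⟩
  have hzl1 : |z.re| + |z.im| = 1 := by
    simp only [hz, Complex.add_re, Complex.add_im, Complex.ofReal_re, Complex.ofReal_im,
      Complex.I_mul_re, Complex.I_mul_im, neg_zero, add_zero, zero_add]
    rw [abs_of_nonneg (sq_nonneg _), abs_of_nonneg (sq_nonneg _), sin_sq_add_cos_sq]
  have h := Complex.mul_cos_add_sin_pow_four_eq hr.le hφ₀ hφ₁.le (hΔz ▸ hpolar)
  rw [hzl1, one_pow] at h
  exact eq_one_div_of_mul_eq_one_left h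
end

section
/- The maximum of |Im(Δ₄)| over fourth-order Bargmann invariants Δ₄ = e^{iφ}/(sin(φ/4)+cos(φ/4))⁴ on the boundary curve is the value Im evaluated at the critical φ, approximately 0.38490; in particular there exist four qubit unit vectors whose fourth-order Bargmann invariant has imaginary part exceeding 1/4. -/
open Matrix Real

lemma barg_im_eq (φ : ℝ) :
    (Complex.exp (φ * Complex.I) / ((sin (φ / 4) + cos (φ / 4) : ℝ) : ℂ) ^ 4).im
      = sin φ / (sin (φ / 4) + cos (φ / 4)) ^ 4 := by
  rw [← Complex.ofReal_pow, Complex.div_ofReal_im, Complex.exp_ofReal_mul_I_im]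

lemma barg_denom_eq (φ : ℝ) :
    (sin (φ / 4) + cos (φ / 4)) ^ 4 = (1 + sin (φ / 2)) ^ 2 := by
  have h : (sin (φ / 4) + cos (φ / 4)) ^ 2 = 1 + sin (φ / 2) := by
    rw [show φ / 2 = 2 * (φ / 4) by ring, sin_two_mul]
    nlinarith [sin_sq_add_cos_sq (φ / 4)]
  rw [show (4:ℕ) = 2 * 2 from rfl, pow_mul, h]

lemma barg_bound (s c : ℝ) (h : s^2 + c^2 = 1) (hs : 0 ≤ s) :
    2 * s * c ≤ 0.385 * (1 + s)^2 := by
  rcases le_or_gt c 0 with hc | hc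
  · nlinarith [sq_nonneg (1+s)]
  · have hs1 : s ≤ 1 := by nlinarith
    have key : 4 * s^2 * (1 - s^2) ≤ 0.148225 * (1+s)^4 := by
      nlinarith [sq_nonneg (2*s - 1), sq_nonneg s, mul_nonneg hs (sub_nonneg.2 hs1),
        sq_nonneg (s-1), mul_nonneg (mul_nonneg hs hs) (sub_nonneg.2 hs1),
        sq_nonneg ((2*s-1)*(s+1))]
    nlinarith [sq_nonneg (0.385 * (1+s)^2 - 2*s*c), mul_pos hc hc, sq_nonneg (1+s),
      mul_nonneg hs hc.le]

noncomputable def bargΨ : Fin 4 → Fin 2 → ℂ :=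
  ![![((Real.sqrt 3 / 2 : ℝ) : ℂ), 1/2],
    ![((Real.sqrt 3 / 2 : ℝ) : ℂ), Complex.I/2],
    ![((Real.sqrt 3 / 2 : ℝ) : ℂ), -(1/2)],
    ![((Real.sqrt 3 / 2 : ℝ) : ℂ), -(Complex.I/2)]]

lemma bargΨ_norm (k : Fin 4) : star (bargΨ k) ⬝ᵥ bargΨ k = 1 := by
  have hr : Real.sqrt 3 * Real.sqrt 3 = 3 := Real.mul_self_sqrt (by norm_num)
  fin_cases k <;>
  · simp [bargΨ, dotProduct, Fin.sum_univ_two, Complex.ext_iff, map_div₀, map_ofNat,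
      Complex.conj_ofReal]
    ring_nf
    nlinarith [hr]

lemma bargΨ_prod : ((star (bargΨ 0) ⬝ᵥ bargΨ 1) * (star (bargΨ 1) ⬝ᵥ bargΨ 2)
    * (star (bargΨ 2) ⬝ᵥ bargΨ 3) * (star (bargΨ 3) ⬝ᵥ bargΨ 0)).im > 1 / 4 := by
  have hr : Real.sqrt 3 * Real.sqrt 3 = 3 := Real.mul_self_sqrt (by norm_num)
  have h01 : star (bargΨ 0) ⬝ᵥ bargΨ 1 = 3/4 + Complex.I/4 := by
    simp [bargΨ, dotProduct, Fin.sum_univ_two, map_div₀, map_ofNat,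
      Complex.conj_ofReal, Complex.ext_iff]
    constructor <;> nlinarith [hr]
  have h12 : star (bargΨ 1) ⬝ᵥ bargΨ 2 = 3/4 + Complex.I/4 := by
    simp [bargΨ, dotProduct, Fin.sum_univ_two, map_div₀, map_ofNat,
      Complex.conj_ofReal, Complex.ext_iff]
    constructor <;> nlinarith [hr]
  have h23 : star (bargΨ 2) ⬝ᵥ bargΨ 3 = 3/4 + Complex.I/4 := by
    simp [bargΨ, dotProduct, Fin.sum_univ_two, map_div₀, map_ofNat,
      Complex.conj_ofReal, Complex.ext_iff]
    constructor <;> nlinarith [hr]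
  have h30 : star (bargΨ 3) ⬝ᵥ bargΨ 0 = 3/4 + Complex.I/4 := by
    simp [bargΨ, dotProduct, Fin.sum_univ_two, map_div₀, map_ofNat,
      Complex.conj_ofReal, Complex.ext_iff]
    constructor <;> nlinarith [hr]
  rw [h01, h12, h23, h30]
  simp [Complex.ext_iff, Complex.mul_im, Complex.mul_re]
  norm_num

/-- The maximum of `Im Δ₄` over the boundary curve `φ ↦ e^{iφ}/(sin(φ/4)+cos(φ/4))⁴`
is approximately `0.38490`; in particular there exist four qubit unit vectors whose
fourth-order Bargmann invariant has imaginary part exceeding `1/4`. -/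
theorem fourth_invariant_max_im :
    (∃ φ : ℝ, 0 ≤ φ ∧ φ < 2 * π ∧
        (Complex.exp (φ * Complex.I) / ((sin (φ / 4) + cos (φ / 4) : ℝ) : ℂ) ^ 4).im
          > 0.3849) ∧
    (∀ φ : ℝ, 0 ≤ φ → φ < 2 * π →
        (Complex.exp (φ * Complex.I) / ((sin (φ / 4) + cos (φ / 4) : ℝ) : ℂ) ^ 4).im
          ≤ 0.385) ∧
    (∃ ψ : Fin 4 → Fin 2 → ℂ, (∀ k, star (ψ k) ⬝ᵥ ψ k = 1) ∧
        ((star (ψ 0) ⬝ᵥ ψ 1) * (star (ψ 1) ⬝ᵥ ψ 2) * (star (ψ 2) ⬝ᵥ ψ 3)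
            * (star (ψ 3) ⬝ᵥ ψ 0)).im > 1 / 4) := by
  have hpi := Real.pi_gt_three
  refine ⟨⟨π/3, by positivity, by linarith, ?_⟩, ?_, bargΨ, bargΨ_norm, bargΨ_prod⟩
  · rw [barg_im_eq, barg_denom_eq]
    have h6 : sin ((π/3) / 2) = 1/2 := by
      rw [show (π/3)/2 = π/6 by ring]; exact Real.sin_pi_div_six
    have h3 : sin (π/3) = Real.sqrt 3 / 2 := Real.sin_pi_div_three
    rw [h6, h3]
    have hr : Real.sqrt 3 * Real.sqrt 3 = 3 := Real.mul_self_sqrt (by norm_num)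
    rw [gt_iff_lt, lt_div_iff₀ (by norm_num)]
    nlinarith [hr, Real.sqrt_nonneg 3]
  · intro φ h0 h2
    rw [barg_im_eq, barg_denom_eq]
    have hs0 : 0 ≤ sin (φ/2) :=
      Real.sin_nonneg_of_nonneg_of_le_pi (by linarith) (by linarith)
    have hsin : sin φ = 2 * sin (φ/2) * cos (φ/2) := by
      have := Real.sin_two_mul (φ/2)
      rwa [show 2*(φ/2) = φ by ring] at this
    have hpos : (0:ℝ) < (1 + sin (φ/2))^2 := by positivity
    rw [div_le_iff₀ hpos, hsin]
    exact barg_bound _ _ (sin_sq_add_cos_sq (φ/2)) hs0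
end

section
/- There exist four unit vectors in ℂ² whose fourth-order Bargmann invariant has real part equal to −1/4, and −1/4 is the minimum of Re(Δ) over the boundary curve Δ = e^{iφ}/(sin(φ/4)+cos(φ/4))⁴. -/
open Matrix Real

/-- There exist four qubit unit vectors whose fourth-order Bargmann invariant has
real part `-1/4`, and `-1/4` is the minimum of `Re Δ` over the boundary curve
`φ ↦ e^{iφ}/(sin(φ/4)+cos(φ/4))⁴`. -/
theorem fourth_invariant_min_re :
    (∃ ψ : Fin 4 → Fin 2 → ℂ, (∀ k, star (ψ k) ⬝ᵥ ψ k = 1) ∧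
        ((star (ψ 0) ⬝ᵥ ψ 1) * (star (ψ 1) ⬝ᵥ ψ 2) * (star (ψ 2) ⬝ᵥ ψ 3)
            * (star (ψ 3) ⬝ᵥ ψ 0)).re = -(1 / 4)) ∧
    IsLeast
      {x : ℝ | ∃ φ : ℝ, 0 ≤ φ ∧ φ < 2 * π ∧
          x = (Complex.exp (φ * Complex.I)
              / ((sin (φ / 4) + cos (φ / 4) : ℝ) : ℂ) ^ 4).re}
      (-(1 / 4)) := by
  constructor
  · -- Existence: take `ψ k = (1/√2, i^k/√2)`.
    set c : ℂ := (((Real.sqrt 2)⁻¹ : ℝ) : ℂ) with hc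
    have hcc : c * c = 1 / 2 := by
      rw [hc, ← Complex.ofReal_mul, ← Real.sqrt_inv, Real.mul_self_sqrt (by norm_num)]
      norm_num
    have hs : (starRingEnd ℂ) c = c := by rw [hc]; exact Complex.conj_ofReal _
    refine ⟨![![c, c], ![c, c * Complex.I], ![c, -c], ![c, -c * Complex.I]], ?_, ?_⟩
    · intro k
      fin_cases k <;>
        · simp [dotProduct, Fin.sum_univ_two, Complex.star_def, Complex.conj_I,
            hs, ← hc]
          first
          | linear_combination (2 : ℂ) * hcc
          | linear_combination (2 : ℂ) * hcc - (c * c) * Complex.I_sq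
    · have f01 : star (![![c, c], ![c, c * Complex.I], ![c, -c], ![c, -c * Complex.I]]
          (0 : Fin 4)) ⬝ᵥ ![![c, c], ![c, c * Complex.I], ![c, -c], ![c, -c * Complex.I]]
          (1 : Fin 4) = (1 + Complex.I) / 2 := by
        simp [dotProduct, Fin.sum_univ_two, Complex.star_def, Complex.conj_I, hs, ← hc]
        linear_combination (1 + Complex.I) * hcc
      have f12 : star (![![c, c], ![c, c * Complex.I], ![c, -c], ![c, -c * Complex.I]]
          (1 : Fin 4)) ⬝ᵥ ![![c, c], ![c, c * Complex.I], ![c, -c], ![c, -c * Complex.I]]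
          (2 : Fin 4) = (1 + Complex.I) / 2 := by
        simp [dotProduct, Fin.sum_univ_two, Complex.star_def, Complex.conj_I, hs, ← hc]
        linear_combination (1 + Complex.I) * hcc
      have f23 : star (![![c, c], ![c, c * Complex.I], ![c, -c], ![c, -c * Complex.I]]
          (2 : Fin 4)) ⬝ᵥ ![![c, c], ![c, c * Complex.I], ![c, -c], ![c, -c * Complex.I]]
          (3 : Fin 4) = (1 + Complex.I) / 2 := by
        simp [dotProduct, Fin.sum_univ_two, Complex.star_def, Complex.conj_I, hs, ← hc]
        linear_combination (1 + Complex.I) * hcc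
      have f30 : star (![![c, c], ![c, c * Complex.I], ![c, -c], ![c, -c * Complex.I]]
          (3 : Fin 4)) ⬝ᵥ ![![c, c], ![c, c * Complex.I], ![c, -c], ![c, -c * Complex.I]]
          (0 : Fin 4) = (1 + Complex.I) / 2 := by
        simp [dotProduct, Fin.sum_univ_two, Complex.star_def, Complex.conj_I, hs, ← hc]
        linear_combination (1 + Complex.I) * hcc
      rw [f01, f12, f23, f30]
      have : ((1 + Complex.I) / 2) * ((1 + Complex.I) / 2) * ((1 + Complex.I) / 2)
          * ((1 + Complex.I) / 2) = -(1/4 : ℂ) := by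
        linear_combination ((5 + 4 * Complex.I + Complex.I ^ 2) / 16) * Complex.I_sq
      rw [this]
      norm_num
  · -- The minimum over the boundary curve.
    have key : ∀ φ : ℝ, (Complex.exp (φ * Complex.I)
        / ((sin (φ / 4) + cos (φ / 4) : ℝ) : ℂ) ^ 4).re
        = Real.cos φ / (sin (φ / 4) + cos (φ / 4)) ^ 4 := by
      intro φ
      rw [show (((sin (φ / 4) + cos (φ / 4) : ℝ)) : ℂ) ^ 4
          = (((sin (φ / 4) + cos (φ / 4)) ^ 4 : ℝ) : ℂ) by push_cast; ring,
        Complex.div_ofReal_re, Complex.exp_ofReal_mul_I_re]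
    have sq_eq : ∀ φ : ℝ, (sin (φ / 4) + cos (φ / 4)) ^ 4 = (1 + sin (φ / 2)) ^ 2 := by
      intro φ
      have h1 : sin (φ / 2) = 2 * sin (φ / 4) * cos (φ / 4) := by
        rw [show φ / 2 = 2 * (φ / 4) by ring, Real.sin_two_mul]
      have h2 := Real.sin_sq_add_cos_sq (φ / 4)
      have h3 : (sin (φ / 4) + cos (φ / 4)) ^ 2 = 1 + sin (φ / 2) := by
        linear_combination h2 - h1
      rw [show (4 : ℕ) = 2 * 2 from rfl, pow_mul, h3]
    constructor
    · refine ⟨π, le_of_lt Real.pi_pos, by linarith [Real.pi_pos], ?_⟩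
      rw [key, sq_eq, Real.cos_pi, Real.sin_pi_div_two]
      norm_num
    · rintro x ⟨φ, h0, h2, rfl⟩
      rw [key, sq_eq]
      set u := sin (φ / 2) with hu
      have hu0 : 0 ≤ u := Real.sin_nonneg_of_nonneg_of_le_pi (by linarith) (by linarith)
      have hu1 : u ≤ 1 := Real.sin_le_one _
      have hcosφ : Real.cos φ = 1 - 2 * u ^ 2 := by
        rw [show φ = 2 * (φ / 2) by ring, Real.cos_two_mul, hu]
        have := Real.sin_sq_add_cos_sq (φ / 2)
        nlinarith
      rw [hcosφ, le_div_iff₀ (by nlinarith : (0:ℝ) < (1 + u) ^ 2)]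
      nlinarith [mul_nonneg (by linarith : (0:ℝ) ≤ 1 - u) (by linarith : (0:ℝ) ≤ 5 + 7 * u)]
end

section
/- For any triple of unit vectors ψ₁, ψ₂, ψ₃ in any finite-dimensional complex Hilbert space with pairwise overlaps Δ_{ij} = |⟨ψᵢ,ψⱼ⟩|², there exists a triple of unit vectors φ₁, φ₂, φ₃ in ℝ³ ⊂ ℂ³ with real coordinates such that |⟨φᵢ,φⱼ⟩|² = Δ_{ij} for all i < j. -/
set_option maxHeartbeats 1000000

noncomputable def ev (v : Fin 3 → ℝ) : EuclideanSpace ℝ (Fin 3) :=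
  (WithLp.equiv 2 (Fin 3 → ℝ)).symm v

lemma ev_inner (p q r p' q' r' : ℝ) :
    (inner ℝ (ev ![p,q,r]) (ev ![p',q',r']) : ℝ) = p*p' + q*q' + r*r' := by
  simp [ev, PiLp.inner_apply, Fin.sum_univ_three]; ring

lemma ev_norm_one (p q r : ℝ) (h : p^2+q^2+r^2 = 1) : ‖ev ![p,q,r]‖ = 1 := by
  rw [EuclideanSpace.norm_eq]
  simp [ev, Fin.sum_univ_three, ← sq, sq_abs]
  linarith

/-- Theorem 4 of the paper (`Q₃ = R₃`): the pairwise overlaps of any triple of unit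
vectors in a complex Hilbert space are also realized by a triple of real unit
vectors in `ℝ³`. -/
theorem overlaps_three_real_realizable
    (E : Type) [NormedAddCommGroup E] [InnerProductSpace ℂ E]
    [FiniteDimensional ℂ E]
    (ψ : Fin 3 → E) (hψ : ∀ i, ‖ψ i‖ = 1) :
    ∃ φ : Fin 3 → EuclideanSpace ℝ (Fin 3),
      (∀ i, ‖φ i‖ = 1) ∧
      ∀ i j : Fin 3, i < j →
        (inner ℝ (φ i) (φ j) : ℝ) ^ 2 = ‖(inner ℂ (ψ i) (ψ j) : ℂ)‖ ^ 2 := by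
  have hself : ∀ i, (inner ℂ (ψ i) (ψ i) : ℂ) = 1 := by
    intro i; rw [inner_self_eq_norm_sq_to_K, hψ i]; norm_num
  set x : ℂ := inner ℂ (ψ 0) (ψ 1) with hxdef
  set y : ℂ := inner ℂ (ψ 0) (ψ 2) with hydef
  set z : ℂ := inner ℂ (ψ 1) (ψ 2) with hzdef
  set a : ℝ := ‖x‖ with hadef
  set b : ℝ := ‖y‖ with hbdef
  set c : ℝ := ‖z‖ with hcdef
  have ha0 : 0 ≤ a := norm_nonneg _
  have hb0 : 0 ≤ b := norm_nonneg _
  have hc0 : 0 ≤ c := norm_nonneg _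
  have hle1 : ∀ i j : Fin 3, ‖(inner ℂ (ψ i) (ψ j) : ℂ)‖ ≤ 1 := by
    intro i j
    calc ‖(inner ℂ (ψ i) (ψ j) : ℂ)‖ ≤ ‖ψ i‖ * ‖ψ j‖ := norm_inner_le_norm _ _
    _ = 1 := by rw [hψ i, hψ j]; ring
  have ha1 : a ≤ 1 := hle1 0 1
  have hb1 : b ≤ 1 := hle1 0 2
  have hc1 : c ≤ 1 := hle1 1 2
  -- projections orthogonal to ψ 0
  set u : E := ψ 1 - x • ψ 0 with hudef
  set w : E := ψ 2 - y • ψ 0 with hwdef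
  have habs : ∀ ζ : ℂ, ζ * (starRingEnd ℂ) ζ = ((‖ζ‖ : ℝ) : ℂ)^2 := by
    intro ζ
    rw [Complex.mul_conj]
    norm_cast
    rw [Complex.normSq_eq_norm_sq]
  have h10 : (inner ℂ (ψ 1) (ψ 0) : ℂ) = (starRingEnd ℂ) x := by
    rw [hxdef, inner_conj_symm]
  have h20 : (inner ℂ (ψ 2) (ψ 0) : ℂ) = (starRingEnd ℂ) y := by
    rw [hydef, inner_conj_symm]
  have hiu : (inner ℂ u u : ℂ) = ((1 - a^2 : ℝ) : ℂ) := by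
    simp only [hudef, inner_sub_left, inner_sub_right, inner_smul_left, inner_smul_right,
      hself, ← hxdef, h10]
    rw [mul_comm ((starRingEnd ℂ) x) x, habs x, ← hadef]
    push_cast
    ring
  have hiw : (inner ℂ w w : ℂ) = ((1 - b^2 : ℝ) : ℂ) := by
    simp only [hwdef, inner_sub_left, inner_sub_right, inner_smul_left, inner_smul_right,
      hself, ← hydef, h20]
    rw [mul_comm ((starRingEnd ℂ) y) y, habs y, ← hbdef]
    push_cast
    ring
  have hiuw : (inner ℂ u w : ℂ) = z - (starRingEnd ℂ) x * y := by
    simp only [hudef, hwdef, inner_sub_left, inner_sub_right, inner_smul_left, inner_smul_right,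
      hself, ← hxdef, ← hydef, ← hzdef, h10, h20]
    ring
  have hnu : ‖u‖ = Real.sqrt (1 - a^2) := by
    have h2 : (‖u‖:ℝ)^2 = 1 - a^2 := by
      rw [@norm_sq_eq_re_inner ℂ, hiu]; simp [← Complex.ofReal_pow]
    rw [← h2, Real.sqrt_sq (norm_nonneg u)]
  have hnw : ‖w‖ = Real.sqrt (1 - b^2) := by
    have h2 : (‖w‖:ℝ)^2 = 1 - b^2 := by
      rw [@norm_sq_eq_re_inner ℂ, hiw]; simp [← Complex.ofReal_pow]
    rw [← h2, Real.sqrt_sq (norm_nonneg w)]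
  set s : ℝ := Real.sqrt (1 - a^2) * Real.sqrt (1 - b^2) with hsdef
  have hs0 : 0 ≤ s := mul_nonneg (Real.sqrt_nonneg _) (Real.sqrt_nonneg _)
  have hs2 : s^2 = (1 - a^2) * (1 - b^2) := by
    rw [hsdef, mul_pow, Real.sq_sqrt (by nlinarith), Real.sq_sqrt (by nlinarith)]
  have hcs : ‖z - (starRingEnd ℂ) x * y‖ ≤ s := by
    rw [← hiuw, hsdef, ← hnu, ← hnw]
    exact norm_inner_le_norm u w
  have hconj : ‖(starRingEnd ℂ) x * y‖ = a * b := by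
    rw [norm_mul, RCLike.norm_conj]
  have hub : c ≤ a * b + s := by
    calc c = ‖(z - (starRingEnd ℂ) x * y) + (starRingEnd ℂ) x * y‖ := by rw [hcdef]; ring_nf
    _ ≤ ‖z - (starRingEnd ℂ) x * y‖ + ‖(starRingEnd ℂ) x * y‖ := norm_add_le _ _
    _ ≤ s + a * b := by rw [hconj]; linarith
    _ = a * b + s := by ring
  have hlb : a * b - s ≤ c := by
    have : a * b = ‖z - (z - (starRingEnd ℂ) x * y)‖ := by rw [← hconj]; ring_nf
    have h2 : a * b ≤ c + s := by
      rw [this]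
      calc ‖z - (z - (starRingEnd ℂ) x * y)‖ ≤ ‖z‖ + ‖z - (starRingEnd ℂ) x * y‖ := norm_sub_le _ _
      _ ≤ c + s := by rw [← hcdef]; linarith
    linarith
  have key : 0 ≤ 1 - a^2 - b^2 - c^2 + 2*a*b*c := by
    nlinarith [mul_nonneg (by linarith : (0:ℝ) ≤ c - (a*b - s)) (by linarith : (0:ℝ) ≤ a*b + s - c), hs2]
  -- the real construction
  set s1 : ℝ := Real.sqrt (1 - a^2) with hs1def
  have hs1sq : s1^2 = 1 - a^2 := Real.sq_sqrt (by nlinarith)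
  set t : ℝ := (c - a*b)/s1 with htdef
  have hst : s1 * t = c - a*b := by
    by_cases h : s1 = 0
    · have haa : a = 1 := by nlinarith [hs1sq]
      have key' := key
      rw [haa] at key'
      have h0 : (b - c)^2 = 0 := le_antisymm (by nlinarith [key']) (sq_nonneg _)
      have hcb : b - c = 0 := by
        have := sq_eq_zero_iff.mp h0
        exact this
      rw [h, zero_mul, haa]
      linarith
    · rw [htdef]; field_simp
  have ht2 : t^2 ≤ 1 - b^2 := by
    by_cases h : s1 = 0
    · rw [htdef, h, div_zero]; nlinarith
    · have hpos : 0 < s1^2 := by positivity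
      have h1 : (s1 * t)^2 ≤ (1 - a^2) * (1 - b^2) := by rw [hst]; nlinarith
      rw [mul_pow, hs1sq] at h1
      nlinarith
  set d : ℝ := Real.sqrt (1 - b^2 - t^2) with hddef
  have hd2 : d^2 = 1 - b^2 - t^2 := Real.sq_sqrt (by linarith)
  refine ⟨![ev ![1,0,0], ev ![a,s1,0], ev ![b,t,d]], ?_, ?_⟩
  · intro i
    fin_cases i
    · show ‖ev ![1,0,0]‖ = 1
      exact ev_norm_one 1 0 0 (by norm_num)
    · show ‖ev ![a,s1,0]‖ = 1
      exact ev_norm_one a s1 0 (by nlinarith [hs1sq])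
    · show ‖ev ![b,t,d]‖ = 1
      exact ev_norm_one b t d (by nlinarith [hd2])
  · intro i j hij
    fin_cases i <;> fin_cases j <;> try exact absurd hij (by decide)
    · show (inner ℝ (ev ![1,0,0]) (ev ![a,s1,0]) : ℝ)^2 = ‖(inner ℂ (ψ 0) (ψ 1) : ℂ)‖^2
      rw [ev_inner, ← hxdef, ← hadef]; ring
    · show (inner ℝ (ev ![1,0,0]) (ev ![b,t,d]) : ℝ)^2 = ‖(inner ℂ (ψ 0) (ψ 2) : ℂ)‖^2
      rw [ev_inner, ← hydef, ← hbdef]; ring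
    · show (inner ℝ (ev ![a,s1,0]) (ev ![b,t,d]) : ℝ)^2 = ‖(inner ℂ (ψ 1) (ψ 2) : ℂ)‖^2
      rw [ev_inner, ← hzdef, ← hcdef]
      nlinarith [hst]
end

section
/- There is no tuple of four unit vectors with all real coordinates (in ℝ^d for any d) whose pairwise overlaps equal Δ₁₂ = Δ₁₃ = Δ₂₃ = 1/2, Δ₁₄ = 3/4, Δ₂₄ = (4+√6)/8, Δ₃₄ = (4−√6)/8, even though this overlap tuple is realized by four unit vectors in ℂ². -/
open Matrix Real

lemma sq_mono_aux' (l x : ℝ) (hl : 0 ≤ l) (hx : 0 ≤ x) (h : l^2 ≤ x^2) : l ≤ x := by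
  nlinarith

set_option maxHeartbeats 1000000 in
lemma overlap_aux (a b c d e f : ℝ) (hA : 0 ≤ a) (hB : 0 ≤ b) (hC : 0 ≤ c)
    (ha : a^2 = 1/2) (hb : b^2 = 1/2) (hc : c^2 = 3/4) (hd : d^2 = 1/2)
    (he : e^2 = (4 + Real.sqrt 6)/8) (hf : f^2 = (4 - Real.sqrt 6)/8)
    (hQ : ∀ x0 x1 x2 x3 : ℝ, 0 ≤ x0^2 + x1^2 + x2^2 + x3^2 +
      2*(a*x0*x1 + b*x0*x2 + c*x0*x3 + d*x1*x2 + e*x1*x3 + f*x2*x3)) : False := by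
  have h6 : Real.sqrt 6 ^ 2 = 6 := Real.sq_sqrt (by norm_num)
  have h6n : 0 ≤ Real.sqrt 6 := Real.sqrt_nonneg 6
  have h6l : 2.449 ≤ Real.sqrt 6 :=
    sq_mono_aux' _ _ (by norm_num) h6n (by rw [h6]; norm_num)
  have h6u : Real.sqrt 6 ≤ 2.4495 :=
    sq_mono_aux' _ _ h6n (by norm_num) (by rw [h6]; norm_num)
  have hal : 0.7071 ≤ a := sq_mono_aux' _ _ (by norm_num) hA (by rw [ha]; norm_num)
  have hau : a ≤ 0.70711 := sq_mono_aux' _ _ hA (by norm_num) (by rw [ha]; norm_num)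
  have hbl : 0.7071 ≤ b := sq_mono_aux' _ _ (by norm_num) hB (by rw [hb]; norm_num)
  have hbu : b ≤ 0.70711 := sq_mono_aux' _ _ hB (by norm_num) (by rw [hb]; norm_num)
  have hcl : 0.866 ≤ c := sq_mono_aux' _ _ (by norm_num) hC (by rw [hc]; norm_num)
  have hcu : c ≤ 0.86603 := sq_mono_aux' _ _ hC (by norm_num) (by rw [hc]; norm_num)
  rcases le_or_gt 0 d with hD | hD
  · have hdl : 0.7071 ≤ d :=
      sq_mono_aux' _ _ (by norm_num) hD (by rw [hd]; norm_num)
    have hdu : d ≤ 0.70711 :=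
      sq_mono_aux' _ _ hD (by norm_num) (by rw [hd]; norm_num)
    rcases le_or_gt 0 e with hE | hE
    · have hel : 0.8978 ≤ e :=
        sq_mono_aux' _ _ (by norm_num) hE (by rw [he]; linarith only [h6l])
      have heu : e ≤ 0.898 :=
        sq_mono_aux' _ _ hE (by norm_num) (by rw [he]; linarith only [h6u])
      rcases le_or_gt 0 f with hF | hF
      · have hfl : 0.44 ≤ f :=
          sq_mono_aux' _ _ (by norm_num) hF (by rw [hf]; linarith only [h6u])
        have hfu : f ≤ 0.44035 :=
          sq_mono_aux' _ _ hF (by norm_num) (by rw [hf]; linarith only [h6l])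
        linarith only [hQ (-6) (-6) 5 8, hal, hau, hbl, hbu, hcl, hcu, hdl, hdu, hel, heu, hfl, hfu]
      · have hfl : 0.44 ≤ -f :=
          sq_mono_aux' _ _ (by norm_num) (by linarith) (by rw [neg_sq, hf]; linarith only [h6u])
        have hfu : -f ≤ 0.44035 :=
          sq_mono_aux' _ _ (by linarith) (by norm_num) (by rw [neg_sq, hf]; linarith only [h6l])
        linarith only [hQ (-4) (-4) 5 6, hal, hau, hbl, hbu, hcl, hcu, hdl, hdu, hel, heu, hfl, hfu]
    · have hel : 0.8978 ≤ -e :=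
        sq_mono_aux' _ _ (by norm_num) (by linarith) (by rw [neg_sq, he]; linarith only [h6l])
      have heu : -e ≤ 0.898 :=
        sq_mono_aux' _ _ (by linarith) (by norm_num) (by rw [neg_sq, he]; linarith only [h6u])
      rcases le_or_gt 0 f with hF | hF
      · have hfl : 0.44 ≤ f :=
          sq_mono_aux' _ _ (by norm_num) hF (by rw [hf]; linarith only [h6u])
        have hfu : f ≤ 0.44035 :=
          sq_mono_aux' _ _ hF (by norm_num) (by rw [hf]; linarith only [h6l])
        linarith only [hQ (-6) 8 (-3) 8, hal, hau, hbl, hbu, hcl, hcu, hdl, hdu, hel, heu, hfl, hfu]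
      · have hfl : 0.44 ≤ -f :=
          sq_mono_aux' _ _ (by norm_num) (by linarith) (by rw [neg_sq, hf]; linarith only [h6u])
        have hfu : -f ≤ 0.44035 :=
          sq_mono_aux' _ _ (by linarith) (by norm_num) (by rw [neg_sq, hf]; linarith only [h6l])
        linarith only [hQ (-6) 5 2 6, hal, hau, hbl, hbu, hcl, hcu, hdl, hdu, hel, heu, hfl, hfu]
  · have hdl : 0.7071 ≤ -d :=
      sq_mono_aux' _ _ (by norm_num) (by linarith) (by rw [neg_sq, hd]; norm_num)
    have hdu : -d ≤ 0.70711 :=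
      sq_mono_aux' _ _ (by linarith) (by norm_num) (by rw [neg_sq, hd]; norm_num)
    rcases le_or_gt 0 e with hE | hE
    · have hel : 0.8978 ≤ e :=
        sq_mono_aux' _ _ (by norm_num) hE (by rw [he]; linarith only [h6l])
      have heu : e ≤ 0.898 :=
        sq_mono_aux' _ _ hE (by norm_num) (by rw [he]; linarith only [h6u])
      rcases le_or_gt 0 f with hF | hF
      · have hfl : 0.44 ≤ f :=
          sq_mono_aux' _ _ (by norm_num) hF (by rw [hf]; linarith only [h6u])
        have hfu : f ≤ 0.44035 :=
          sq_mono_aux' _ _ hF (by norm_num) (by rw [hf]; linarith only [h6l])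
        linarith only [hQ (-5) 8 7 (-4), hal, hau, hbl, hbu, hcl, hcu, hdl, hdu, hel, heu, hfl, hfu]
      · have hfl : 0.44 ≤ -f :=
          sq_mono_aux' _ _ (by norm_num) (by linarith) (by rw [neg_sq, hf]; linarith only [h6u])
        have hfu : -f ≤ 0.44035 :=
          sq_mono_aux' _ _ (by linarith) (by norm_num) (by rw [neg_sq, hf]; linarith only [h6l])
        linarith only [hQ (-8) 5 7 4, hal, hau, hbl, hbu, hcl, hcu, hdl, hdu, hel, heu, hfl, hfu]
    · have hel : 0.8978 ≤ -e :=
        sq_mono_aux' _ _ (by norm_num) (by linarith) (by rw [neg_sq, he]; linarith only [h6l])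
      have heu : -e ≤ 0.898 :=
        sq_mono_aux' _ _ (by linarith) (by norm_num) (by rw [neg_sq, he]; linarith only [h6u])
      rcases le_or_gt 0 f with hF | hF
      · have hfl : 0.44 ≤ f :=
          sq_mono_aux' _ _ (by norm_num) hF (by rw [hf]; linarith only [h6u])
        have hfu : f ≤ 0.44035 :=
          sq_mono_aux' _ _ hF (by norm_num) (by rw [hf]; linarith only [h6l])
        linarith only [hQ (-5) 5 3 4, hal, hau, hbl, hbu, hcl, hcu, hdl, hdu, hel, heu, hfl, hfu]
      · have hfl : 0.44 ≤ -f :=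
          sq_mono_aux' _ _ (by norm_num) (by linarith) (by rw [neg_sq, hf]; linarith only [h6u])
        have hfu : -f ≤ 0.44035 :=
          sq_mono_aux' _ _ (by linarith) (by norm_num) (by rw [neg_sq, hf]; linarith only [h6l])
        linarith only [hQ (-7) 7 6 7, hal, hau, hbl, hbu, hcl, hcu, hdl, hdu, hel, heu, hfl, hfu]
open Matrix Real




lemma overlap_key (a b c d e f : ℝ)
    (ha : a^2 = 1/2) (hb : b^2 = 1/2) (hc : c^2 = 3/4) (hd : d^2 = 1/2)
    (he : e^2 = (4 + Real.sqrt 6)/8) (hf : f^2 = (4 - Real.sqrt 6)/8)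
    (hQ : ∀ x0 x1 x2 x3 : ℝ, 0 ≤ x0^2 + x1^2 + x2^2 + x3^2 +
      2*(a*x0*x1 + b*x0*x2 + c*x0*x3 + d*x1*x2 + e*x1*x3 + f*x2*x3)) : False := by
  set s1 : ℝ := if 0 ≤ a then 1 else -1 with hs1
  set s2 : ℝ := if 0 ≤ b then 1 else -1 with hs2
  set s3 : ℝ := if 0 ≤ c then 1 else -1 with hs3
  have h1 : s1^2 = 1 := by rw [hs1]; split_ifs <;> norm_num
  have h2 : s2^2 = 1 := by rw [hs2]; split_ifs <;> norm_num
  have h3 : s3^2 = 1 := by rw [hs3]; split_ifs <;> norm_num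
  have h1a : 0 ≤ s1 * a := by
    rw [hs1]; split_ifs with h
    · simpa using h
    · have := not_le.mp h; nlinarith
  have h2b : 0 ≤ s2 * b := by
    rw [hs2]; split_ifs with h
    · simpa using h
    · have := not_le.mp h; nlinarith
  have h3c : 0 ≤ s3 * c := by
    rw [hs3]; split_ifs with h
    · simpa using h
    · have := not_le.mp h; nlinarith
  apply overlap_aux (s1*a) (s2*b) (s3*c) (s1*s2*d) (s1*s3*e) (s2*s3*f) h1a h2b h3c
  · rw [mul_pow, h1, one_mul, ha]
  · rw [mul_pow, h2, one_mul, hb]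
  · rw [mul_pow, h3, one_mul, hc]
  · rw [mul_pow, mul_pow, h1, h2, one_mul, one_mul, hd]
  · rw [mul_pow, mul_pow, h1, h3, one_mul, one_mul, he]
  · rw [mul_pow, mul_pow, h2, h3, one_mul, one_mul, hf]
  · intro x0 x1 x2 x3
    have H := hQ x0 (s1*x1) (s2*x2) (s3*x3)
    have hEq : x0^2 + (s1*x1)^2 + (s2*x2)^2 + (s3*x3)^2 +
        2*(a*x0*(s1*x1) + b*x0*(s2*x2) + c*x0*(s3*x3) + d*(s1*x1)*(s2*x2) +
          e*(s1*x1)*(s3*x3) + f*(s2*x2)*(s3*x3)) =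
        x0^2 + x1^2 + x2^2 + x3^2 +
        2*((s1*a)*x0*x1 + (s2*b)*x0*x2 + (s3*c)*x0*x3 + (s1*s2*d)*x1*x2 +
          (s1*s3*e)*x1*x3 + (s2*s3*f)*x2*x3) := by
      linear_combination (x1^2)*h1 + (x2^2)*h2 + (x3^2)*h3
    linarith [H, hEq.ge, hEq.le]


/-- The overlap tuple `(1/2,1/2,3/4,1/2,(4+√6)/8,(4-√6)/8)` is realized by four unit
vectors in `ℂ²` but by no tuple of four real unit vectors in any dimension:
overlap measurements can witness imaginarity of four states. -/
theorem four_state_overlap_witness :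
    (∃ ψ : Fin 4 → Fin 2 → ℂ, (∀ k, star (ψ k) ⬝ᵥ ψ k = 1) ∧
        ‖star (ψ 0) ⬝ᵥ ψ 1‖ ^ 2 = 1 / 2 ∧
        ‖star (ψ 0) ⬝ᵥ ψ 2‖ ^ 2 = 1 / 2 ∧
        ‖star (ψ 0) ⬝ᵥ ψ 3‖ ^ 2 = 3 / 4 ∧
        ‖star (ψ 1) ⬝ᵥ ψ 2‖ ^ 2 = 1 / 2 ∧
        ‖star (ψ 1) ⬝ᵥ ψ 3‖ ^ 2 = (4 + Real.sqrt 6) / 8 ∧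
        ‖star (ψ 2) ⬝ᵥ ψ 3‖ ^ 2 = (4 - Real.sqrt 6) / 8) ∧
    ¬ (∃ (d : ℕ) (v : Fin 4 → EuclideanSpace ℝ (Fin d)),
        (∀ k, ‖v k‖ = 1) ∧
        (inner ℝ (v 0) (v 1) : ℝ) ^ 2 = 1 / 2 ∧
        (inner ℝ (v 0) (v 2) : ℝ) ^ 2 = 1 / 2 ∧
        (inner ℝ (v 0) (v 3) : ℝ) ^ 2 = 3 / 4 ∧
        (inner ℝ (v 1) (v 2) : ℝ) ^ 2 = 1 / 2 ∧
        (inner ℝ (v 1) (v 3) : ℝ) ^ 2 = (4 + Real.sqrt 6) / 8 ∧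
        (inner ℝ (v 2) (v 3) : ℝ) ^ 2 = (4 - Real.sqrt 6) / 8) := by
  constructor
  · have r2 : Real.sqrt 2 ^ 2 = 2 := Real.sq_sqrt (by norm_num)
    have r3 : Real.sqrt 3 ^ 2 = 3 := Real.sq_sqrt (by norm_num)
    have r23 : Real.sqrt 2 * Real.sqrt 3 = Real.sqrt 6 := by
      rw [← Real.sqrt_mul (by norm_num : (0:ℝ) ≤ 2) 3]; norm_num
    have h36 : Real.sqrt 2 ^ 2 * Real.sqrt 3 ^ 2 = 6 := by rw [r2, r3]; norm_num
    have r4 : Real.sqrt 2 ^ 4 = 4 := by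
      rw [show Real.sqrt 2 ^ 4 = (Real.sqrt 2 ^ 2) ^ 2 by ring, r2]; norm_num
    have h236 : Real.sqrt 2 ^ 3 * Real.sqrt 3 = 2 * Real.sqrt 6 := by
      rw [show Real.sqrt 2 ^ 3 * Real.sqrt 3 = Real.sqrt 2 ^ 2 * (Real.sqrt 2 * Real.sqrt 3) by ring,
        r2, r23]
    refine ⟨![![1, 0],
      ![(↑(Real.sqrt 2 / 2) : ℂ), (↑(Real.sqrt 2 / 2) : ℂ)],
      ![(↑(Real.sqrt 2 / 2) : ℂ), -(↑(Real.sqrt 2 / 2) : ℂ) * Complex.I],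
      ![(↑(Real.sqrt 3 / 2) : ℂ), (↑(Real.sqrt 2 / 4) : ℂ) + (↑(Real.sqrt 2 / 4) : ℂ) * Complex.I]],
      ?_, ?_, ?_, ?_, ?_, ?_, ?_⟩
    · intro k
      fin_cases k <;>
      · apply Complex.ext <;>
        · simp [dotProduct, Fin.sum_univ_two, Pi.star_apply, Complex.star_def,
            _root_.map_mul, map_add, map_neg, Complex.conj_ofReal, Complex.conj_I,
            Complex.add_re, Complex.add_im, Complex.mul_re, Complex.mul_im,
            Complex.ofReal_re, Complex.ofReal_im, Complex.I_re, Complex.I_im,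
            -Complex.ofReal_div]
          try (ring_nf; linarith only [r2, r3, r23, h36, r4, h236])
    all_goals
    · rw [Complex.sq_norm]
      simp [dotProduct, Fin.sum_univ_two, Complex.normSq_apply, Pi.star_apply,
        Complex.star_def, _root_.map_mul, map_add, map_neg, Complex.conj_ofReal, Complex.conj_I,
        Complex.add_re, Complex.add_im, Complex.mul_re, Complex.mul_im,
        Complex.ofReal_re, Complex.ofReal_im, Complex.I_re, Complex.I_im,
        -Complex.ofReal_div]
      try (ring_nf; linarith only [r2, r3, r23, h36, r4, h236])
  · rintro ⟨dim, v, hnorm, h01, h02, h03, h12, h13, h23⟩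
    have hunit : ∀ k, (inner ℝ (v k) (v k) : ℝ) = 1 := fun k => by
      rw [real_inner_self_eq_norm_mul_norm, hnorm, one_mul]
    apply overlap_key _ _ _ _ _ _ h01 h02 h03 h12 h13 h23
    intro x0 x1 x2 x3
    have H : (0:ℝ) ≤ inner ℝ (x0 • v 0 + x1 • v 1 + x2 • v 2 + x3 • v 3)
        (x0 • v 0 + x1 • v 1 + x2 • v 2 + x3 • v 3) := real_inner_self_nonneg
    simp only [inner_add_left, inner_add_right, real_inner_smul_left,
      real_inner_smul_right] at H
    rw [real_inner_comm (v 0) (v 1), real_inner_comm (v 0) (v 2),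
      real_inner_comm (v 0) (v 3), real_inner_comm (v 1) (v 2),
      real_inner_comm (v 1) (v 3), real_inner_comm (v 2) (v 3),
      hunit 0, hunit 1, hunit 2, hunit 3] at H
    nlinarith [H]
end

section
/- The 4×4 real symmetric matrix with unit diagonal and off-diagonal entries H₁₂ = H₁₃ = H₂₃ = 1/√2, H₁₄ = √3/2, H₂₄ = √((4+√6)/8), H₃₄ = √((4−√6)/8) is not positive semidefinite (its smallest eigenvalue is approximately −0.044984 < 0); in particular its determinant or some principal minor is negative. -/
open Matrix Real

/-!
The Rayleigh quotient at `x = (7/10, 4/5, -3/5, -1)`, approximately an eigenvector for the negative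
eigenvalue `≈ -0.045`, is negative. In terms of the off-diagonal entries the quadratic form
at `x` is affine, `249/100 - 17/25 a - 7/5 c - 8/5 p + 6/5 q`, so crude two-digit bounds on
the four surds already make it negative.
-/

theorem not_posSemidef_of_entry_bounds {a c p q : ℝ} (ha : 7 / 10 ≤ a) (hc : 86 / 100 ≤ c)
    (hp : 89 / 100 ≤ p) (hq : q ≤ 45 / 100) :
    ¬ (!![1, a, a, c; a, 1, a, p; a, a, 1, q; c, p, q, 1] :
        Matrix (Fin 4) (Fin 4) ℝ).PosSemidef := by
  intro h
  have hx := h.dotProduct_mulVec_nonneg ![7 / 10, 4 / 5, -3 / 5, -1]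
  simp only [star_trivial, dotProduct, mulVec, Fin.sum_univ_four, of_apply, cons_val',
    cons_val_zero, cons_val_one, cons_val, cons_val_fin_one] at hx
  linarith

/-- The candidate Gram matrix `G(0,0,0)` with all signs positive is not positive
semidefinite. -/
theorem candidate_gram_not_psd :
    ¬ (!![1, 1 / Real.sqrt 2, 1 / Real.sqrt 2, Real.sqrt 3 / 2;
          1 / Real.sqrt 2, 1, 1 / Real.sqrt 2, Real.sqrt ((4 + Real.sqrt 6) / 8);
          1 / Real.sqrt 2, 1 / Real.sqrt 2, 1, Real.sqrt ((4 - Real.sqrt 6) / 8);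
          Real.sqrt 3 / 2, Real.sqrt ((4 + Real.sqrt 6) / 8),
            Real.sqrt ((4 - Real.sqrt 6) / 8), 1] :
        Matrix (Fin 4) (Fin 4) ℝ).PosSemidef := by
  have hsqrt6 : 12 / 5 ≤ √6 := Real.le_sqrt_of_sq_le (by norm_num)
  apply not_posSemidef_of_entry_bounds
  · rw [le_div_iff₀ (by positivity), ← le_div_iff₀' (by norm_num)]
    exact Real.sqrt_le_iff.mpr ⟨by norm_num, by norm_num⟩
  · rw [le_div_iff₀ (by norm_num)]
    exact Real.le_sqrt_of_sq_le (by norm_num)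
  · exact Real.le_sqrt_of_sq_le (by linarith)
  · exact Real.sqrt_le_iff.mpr ⟨by norm_num, by linarith⟩
end

section
/- If four unit vectors ψ₁,...,ψ₄ in a complex Hilbert space have a Gram matrix that is circulant of the form with first row (1, α, s, ᾱ) with s real, then their fourth-order Bargmann invariant ⟨ψ₁,ψ₂⟩⟨ψ₂,ψ₃⟩⟨ψ₃,ψ₄⟩⟨ψ₄,ψ₁⟩ equals α⁴ and satisfies |α⁴| ≤ 1/(|sin(θ)| + |cos(θ)|)⁴ where θ = arg(α). -/
open Real

/-- Four unit vectors with circulant Gram matrix of first row `(1, α, s, conj α)`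
have fourth-order Bargmann invariant `α⁴`, bounded in modulus by
`1/(|sin θ|+|cos θ|)⁴` where `θ = arg α`. -/
theorem circulant_fourth_invariant_bound
    (E : Type*) [NormedAddCommGroup E] [InnerProductSpace ℂ E]
    [FiniteDimensional ℂ E]
    (ψ₁ ψ₂ ψ₃ ψ₄ : E) (h₁ : ‖ψ₁‖ = 1) (h₂ : ‖ψ₂‖ = 1) (h₃ : ‖ψ₃‖ = 1)
    (h₄ : ‖ψ₄‖ = 1) (α : ℂ) (s : ℝ)
    (h12 : (inner ℂ ψ₁ ψ₂ : ℂ) = α) (h23 : (inner ℂ ψ₂ ψ₃ : ℂ) = α)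
    (h34 : (inner ℂ ψ₃ ψ₄ : ℂ) = α) (h41 : (inner ℂ ψ₄ ψ₁ : ℂ) = α)
    (h13 : (inner ℂ ψ₁ ψ₃ : ℂ) = (s : ℂ)) (h24 : (inner ℂ ψ₂ ψ₄ : ℂ) = (s : ℂ)) :
    (inner ℂ ψ₁ ψ₂ : ℂ) * (inner ℂ ψ₂ ψ₃ : ℂ) * (inner ℂ ψ₃ ψ₄ : ℂ) * (inner ℂ ψ₄ ψ₁ : ℂ)
      = α ^ 4 ∧
    ‖α ^ 4‖ ≤ 1 / (|sin (Complex.arg α)| + |cos (Complex.arg α)|) ^ 4 := by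
  have h21 : (inner ℂ ψ₂ ψ₁ : ℂ) = starRingEnd ℂ α := by rw [← inner_conj_symm, h12]
  have h32 : (inner ℂ ψ₃ ψ₂ : ℂ) = starRingEnd ℂ α := by rw [← inner_conj_symm, h23]
  have h43 : (inner ℂ ψ₄ ψ₃ : ℂ) = starRingEnd ℂ α := by rw [← inner_conj_symm, h34]
  have h14 : (inner ℂ ψ₁ ψ₄ : ℂ) = starRingEnd ℂ α := by rw [← inner_conj_symm, h41]
  have h31 : (inner ℂ ψ₃ ψ₁ : ℂ) = (s : ℂ) := by
    rw [← inner_conj_symm, h13]; simp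
  have h42 : (inner ℂ ψ₄ ψ₂ : ℂ) = (s : ℂ) := by
    rw [← inner_conj_symm, h24]; simp
  have h11 : (inner ℂ ψ₁ ψ₁ : ℂ) = 1 := by
    rw [inner_self_eq_norm_sq_to_K, h₁]; norm_num
  have h22 : (inner ℂ ψ₂ ψ₂ : ℂ) = 1 := by
    rw [inner_self_eq_norm_sq_to_K, h₂]; norm_num
  have h33 : (inner ℂ ψ₃ ψ₃ : ℂ) = 1 := by
    rw [inner_self_eq_norm_sq_to_K, h₃]; norm_num
  have h44 : (inner ℂ ψ₄ ψ₄ : ℂ) = 1 := by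
    rw [inner_self_eq_norm_sq_to_K, h₄]; norm_num
  have q1 : (0:ℝ) ≤ 4 + 8*α.re + 4*s := by
    have h := inner_self_nonneg (𝕜 := ℂ) (x := ψ₁ + ψ₂ + ψ₃ + ψ₄)
    simp only [inner_add_left, inner_add_right, h11, h22, h33, h44, h12, h23, h34,
      h41, h13, h24, h21, h32, h43, h14, h31, h42] at h
    simp only [RCLike.re_to_complex, Complex.add_re, Complex.one_re, Complex.conj_re, Complex.ofReal_re] at h
    linarith
  have q2 : (0:ℝ) ≤ 4 - 8*α.re + 4*s := by
    have h := inner_self_nonneg (𝕜 := ℂ) (x := ψ₁ - ψ₂ + ψ₃ - ψ₄)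
    simp only [inner_add_left, inner_add_right, inner_sub_left, inner_sub_right,
      h11, h22, h33, h44, h12, h23, h34,
      h41, h13, h24, h21, h32, h43, h14, h31, h42] at h
    simp only [RCLike.re_to_complex, Complex.add_re, Complex.sub_re, Complex.one_re, Complex.conj_re,
      Complex.ofReal_re] at h
    linarith
  have q3 : (0:ℝ) ≤ 4 - 8*α.im - 4*s := by
    have h := inner_self_nonneg (𝕜 := ℂ)
      (x := ψ₁ + (Complex.I • ψ₂ - ψ₃) - Complex.I • ψ₄)
    simp only [inner_add_left, inner_add_right, inner_sub_left, inner_sub_right,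
      inner_smul_left, inner_smul_right,
      h11, h22, h33, h44, h12, h23, h34,
      h41, h13, h24, h21, h32, h43, h14, h31, h42, Complex.conj_I] at h
    simp only [RCLike.re_to_complex, Complex.add_re, Complex.sub_re, Complex.mul_re, Complex.one_re,
      Complex.conj_re, Complex.conj_im, Complex.ofReal_re, Complex.ofReal_im,
      Complex.I_re, Complex.I_im, Complex.neg_re, Complex.neg_im, Complex.mul_im,
      Complex.one_im, Complex.add_im, Complex.sub_im] at h
    linarith
  have q4 : (0:ℝ) ≤ 4 + 8*α.im - 4*s := by
    have h := inner_self_nonneg (𝕜 := ℂ)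
      (x := ψ₁ - (Complex.I • ψ₂ + ψ₃) + Complex.I • ψ₄)
    simp only [inner_add_left, inner_add_right, inner_sub_left, inner_sub_right,
      inner_smul_left, inner_smul_right,
      h11, h22, h33, h44, h12, h23, h34,
      h41, h13, h24, h21, h32, h43, h14, h31, h42, Complex.conj_I] at h
    simp only [RCLike.re_to_complex, Complex.add_re, Complex.sub_re, Complex.mul_re, Complex.one_re,
      Complex.conj_re, Complex.conj_im, Complex.ofReal_re, Complex.ofReal_im,
      Complex.I_re, Complex.I_im, Complex.neg_re, Complex.neg_im, Complex.mul_im,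
      Complex.one_im, Complex.add_im, Complex.sub_im] at h
    linarith
  have hsum : |α.re| + |α.im| ≤ 1 := by
    rcases abs_cases α.re with ⟨e1, _⟩ | ⟨e1, _⟩ <;>
      rcases abs_cases α.im with ⟨e2, _⟩ | ⟨e2, _⟩ <;> rw [e1, e2] <;> linarith
  set θ := Complex.arg α with hθ
  have hre : ‖α‖ * |cos θ| = |α.re| := by
    rw [← abs_of_nonneg (norm_nonneg α), ← abs_mul, Complex.norm_mul_cos_arg]
  have him : ‖α‖ * |sin θ| = |α.im| := by
    rw [← abs_of_nonneg (norm_nonneg α), ← abs_mul, Complex.norm_mul_sin_arg]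
  have hpos : 0 < |sin θ| + |cos θ| := by
    by_contra hle
    push_neg at hle
    have h0 : |sin θ| + |cos θ| = 0 := le_antisymm hle (by positivity)
    have hs0 : |sin θ| = 0 := by
      have := abs_nonneg (sin θ); have := abs_nonneg (cos θ); linarith
    have hc0 : |cos θ| = 0 := by
      have := abs_nonneg (sin θ); have := abs_nonneg (cos θ); linarith
    rw [abs_eq_zero] at hs0 hc0
    have := sin_sq_add_cos_sq θ
    rw [hs0, hc0] at this
    norm_num at this
  have hbound : ‖α‖ ≤ 1 / (|sin θ| + |cos θ|) := by
    rw [le_div_iff₀ hpos]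
    calc ‖α‖ * (|sin θ| + |cos θ|)
        = |α.im| + |α.re| := by rw [mul_add, hre, him]
      _ ≤ 1 := by linarith
  constructor
  · rw [h12, h23, h34, h41]; ring
  · rw [norm_pow, ← one_div_pow]
    exact pow_le_pow_left₀ (norm_nonneg α) hbound 4
end

section
/- Every complex number Δ on or inside the curve φ ↦ e^{iφ}/(sin(φ/4)+cos(φ/4))⁴ that lies in B₄|_circ is realized by four unit vectors in ℂ²: specifically, for each φ ∈ [0, 2π) the boundary point e^{iφ}/(sin(φ/4)+cos(φ/4))⁴ equals (sin²θ + i cos²θ)⁴ for θ with tan(φ/4) = cos²θ/sin²θ, realized by the qubit tuple |ψ_k⟩ = sin θ|0⟩ + i^k cos θ|1⟩, k = 0,...,3. -/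
open Matrix Real

/-!
With `s = φ / 4` and `d = sin s + cos s > 0`, the number `e^{is} / d` equals `A + i B` with
`A = cos s / d`, `B = sin s / d` nonnegative and `A + B = 1`. Choosing `θ` with `sin² θ = A`
(so `cos² θ = B`) makes `tan s = B / A = cos² θ / sin² θ`, and raising to the fourth power gives
the boundary point. Consecutive vectors of `ψ_k = (sin θ, iᵏ cos θ)` have inner product
`sin² θ + i cos² θ`, and `ψ` is `4`-periodic in `k`, so the cyclic product is its fourth power.
-/

theorem Real.exists_sin_sq_eq_and_cos_sq_eq {a : ℝ} (h₀ : 0 ≤ a) (h₁ : a ≤ 1) :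
    ∃ θ : ℝ, sin θ ^ 2 = a ∧ cos θ ^ 2 = 1 - a := by
  have hsqrt : √a ≤ 1 := Real.sqrt_le_one.mpr h₁
  have hsin : sin (arcsin √a) ^ 2 = a := by
    rw [sin_arcsin (by linarith [Real.sqrt_nonneg a]) hsqrt, sq_sqrt h₀]
  exact ⟨arcsin √a, hsin, by linarith [sin_sq_add_cos_sq (arcsin √a)]⟩

theorem Complex.exp_ofReal_mul_I_div_sin_add_cos {s : ℝ} (h : Real.sin s + Real.cos s ≠ 0) :
    exp (s * I) / ((Real.sin s + Real.cos s : ℝ) : ℂ)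
      = ((Real.cos s / (Real.sin s + Real.cos s) : ℝ) : ℂ)
        + I * ((Real.sin s / (Real.sin s + Real.cos s) : ℝ) : ℂ) := by
  have h' : (Real.sin s : ℂ) + Real.cos s ≠ 0 := by exact_mod_cast h
  rw [exp_mul_I, ← ofReal_sin, ← ofReal_cos]
  push_cast
  field_simp

theorem Complex.neg_I_pow_mul_I_pow (k : ℕ) : (-I) ^ k * I ^ k = 1 := by
  rw [← mul_pow, neg_mul, I_mul_I, neg_neg, one_pow]

def phaseQubit (a b : ℝ) (k : ℕ) : Fin 2 → ℂ :=
  ![(a : ℂ), Complex.I ^ k * (b : ℂ)]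

namespace phaseQubit

variable (a b : ℝ) (k : ℕ)

theorem add_four : phaseQubit a b (k + 4) = phaseQubit a b k := by
  simp [phaseQubit, pow_add, Complex.I_pow_four]

theorem star_dotProduct_self :
    star (phaseQubit a b k) ⬝ᵥ phaseQubit a b k = ((a ^ 2 + b ^ 2 : ℝ) : ℂ) := by
  simp only [phaseQubit, dotProduct, Fin.sum_univ_two, Pi.star_apply, cons_val_zero,
    cons_val_one, RCLike.star_def, map_mul, map_pow, Complex.conj_ofReal, Complex.conj_I]
  push_cast
  linear_combination (b : ℂ) ^ 2 * (Complex.neg_I_pow_mul_I_pow k)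

theorem star_dotProduct_succ :
    star (phaseQubit a b k) ⬝ᵥ phaseQubit a b (k + 1)
      = ((a ^ 2 : ℝ) : ℂ) + Complex.I * ((b ^ 2 : ℝ) : ℂ) := by
  simp only [phaseQubit, dotProduct, Fin.sum_univ_two, Pi.star_apply, cons_val_zero,
    cons_val_one, RCLike.star_def, map_mul, map_pow, Complex.conj_ofReal, Complex.conj_I]
  push_cast
  linear_combination Complex.I * (b : ℂ) ^ 2 * (Complex.neg_I_pow_mul_I_pow k)

theorem cyclic_bargmann_invariant :
    (star (phaseQubit a b 0) ⬝ᵥ phaseQubit a b 1) * (star (phaseQubit a b 1) ⬝ᵥ phaseQubit a b 2)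
      * (star (phaseQubit a b 2) ⬝ᵥ phaseQubit a b 3)
      * (star (phaseQubit a b 3) ⬝ᵥ phaseQubit a b 0)
      = (((a ^ 2 : ℝ) : ℂ) + Complex.I * ((b ^ 2 : ℝ) : ℂ)) ^ 4 := by
  rw [star_dotProduct_succ a b 0, star_dotProduct_succ a b 1, star_dotProduct_succ a b 2,
    ← add_four a b 0, star_dotProduct_succ a b 3]
  ring

end phaseQubit

/-- Every boundary point `e^{iφ}/(sin(φ/4)+cos(φ/4))⁴`, `φ ∈ [0,2π)`, of `B₄|_circ`
is realized by the qubit tuple `ψ_k = sin θ|0⟩ + i^k cos θ|1⟩` where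
`tan(φ/4) = cos²θ/sin²θ`. -/
theorem circulant_boundary_qubit_realization (φ : ℝ) (hφ₀ : 0 ≤ φ) (hφ : φ < 2 * π) :
    ∃ θ : ℝ, tan (φ / 4) = cos θ ^ 2 / sin θ ^ 2 ∧
      Complex.exp (φ * Complex.I) / ((sin (φ / 4) + cos (φ / 4) : ℝ) : ℂ) ^ 4
        = ((sin θ ^ 2 : ℝ) + Complex.I * (cos θ ^ 2 : ℝ)) ^ 4 ∧
      ∃ ψ : Fin 4 → Fin 2 → ℂ,
        (∀ k : Fin 4, ψ k = ![(sin θ : ℂ), Complex.I ^ (k : ℕ) * (cos θ : ℂ)]) ∧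
        (∀ k, star (ψ k) ⬝ᵥ ψ k = 1) ∧
        (star (ψ 0) ⬝ᵥ ψ 1) * (star (ψ 1) ⬝ᵥ ψ 2) * (star (ψ 2) ⬝ᵥ ψ 3)
            * (star (ψ 3) ⬝ᵥ ψ 0)
          = Complex.exp (φ * Complex.I)
              / ((sin (φ / 4) + cos (φ / 4) : ℝ) : ℂ) ^ 4 := by
  set s := φ / 4 with hs
  have hcos : 0 < cos s := cos_pos_of_mem_Ioo ⟨by linarith [pi_pos], by linarith⟩
  have hsin : 0 ≤ sin s := sin_nonneg_of_nonneg_of_le_pi (by positivity) (by linarith)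
  have hd : 0 < sin s + cos s := by linarith
  obtain ⟨θ, hsinθ, hcosθ⟩ := exists_sin_sq_eq_and_cos_sq_eq
    (div_nonneg hcos.le hd.le) ((div_le_one hd).mpr (by linarith))
  have hcosθ : cos θ ^ 2 = sin s / (sin s + cos s) := by
    rw [hcosθ]; field_simp; ring
  have hboundary : Complex.exp (φ * Complex.I) / ((sin s + cos s : ℝ) : ℂ) ^ 4
      = ((sin θ ^ 2 : ℝ) + Complex.I * (cos θ ^ 2 : ℝ)) ^ 4 := by
    rw [hsinθ, hcosθ, ← Complex.exp_ofReal_mul_I_div_sin_add_cos hd.ne', div_pow,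
      ← Complex.exp_nat_mul]
    push_cast [s]
    ring_nf
  refine ⟨θ, ?_, hboundary, fun k => phaseQubit (sin θ) (cos θ) k, fun k => rfl, fun k => ?_, ?_⟩
  · rw [tan_eq_sin_div_cos, hsinθ, hcosθ, div_div_div_cancel_right₀ hd.ne']
  · rw [phaseQubit.star_dotProduct_self, sin_sq_add_cos_sq, Complex.ofReal_one]
  · exact (phaseQubit.cyclic_bargmann_invariant _ _).trans hboundary.symm
end
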